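/- arXiv:2003.04613 — 7 statements merged into one kernel-verified Lean document; each statement's English description precedes it below -/
import Mathlib

section
/- Let s be a real number and c > 0. If x is any one of the four values 0, 1, (s − 2)/3, (s − 3)/3, then the power-law spectrum n(ω) = c·ω^{−x} is a stationary solution of the differential kinetic equation: the function K(ω) = ω^s · n(ω)^4 · (d²/dω²)(1/n)(ω) satisfies (d²/dω²) K(ω) = 0 for all ω > 0. (For x = 0 and x = 1 one has K ≡ 0, these are the thermodynamic equipartition spectra; for x = (s − 2)/3 the function K is a nonzero constant, the direct-cascade KZ spectrum; for x = (s − 3)/3 the function K is linear in ω, the inverse-cascade KZ spectrum.) -/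
/-!
On `ω > 0` the power law `n = c ω^{-x}` gives `1/n = c⁻¹ ω^x`, so `K = ω^s n^4 (1/n)''` is itself
the power law `c³ x (x - 1) ω^a` with `a = s - 3x - 2`, and `K'' = c³ x (x - 1) a (a - 1) ω^{a-2}`.
The four spectra are exactly the roots of the prefactor: `x = 0, 1` kill `x (x - 1)`,
while `x = (s - 2)/3` and `x = (s - 3)/3` give `a = 0` and `a = 1`.
-/

open Filter Topology

noncomputable def kineticFlux (s : ℝ) (n : ℝ → ℝ) (w : ℝ) : ℝ :=
  w ^ s * n w ^ 4 * deriv (deriv fun y => 1 / n y) w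

-- No sign condition: at `y = 0` the junk values of `deriv` and `rpow` happen to agree.
lemma deriv_const_mul_rpow (a p : ℝ) :
    deriv (fun y => a * y ^ p) = fun y => a * p * y ^ (p - 1) := by
  rw [deriv_const_mul_field', Real.deriv_rpow_const']
  ext y
  ring

lemma deriv_deriv_const_mul_rpow (a p : ℝ) :
    deriv (deriv fun y => a * y ^ p) = fun y => a * p * (p - 1) * y ^ (p - 2) := by
  rw [deriv_const_mul_rpow, deriv_const_mul_rpow, sub_sub, one_add_one_eq_two]

lemma one_div_const_mul_rpow_neg (c x : ℝ) {y : ℝ} (hy : 0 < y) :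
    1 / (c * y ^ (-x)) = c⁻¹ * y ^ x := by
  rw [Real.rpow_neg hy.le, one_div, mul_inv, inv_inv]

lemma kineticFlux_powerLaw (s c x : ℝ) {w : ℝ} (hw : 0 < w) :
    kineticFlux s (fun y => c * y ^ (-x)) w = c ^ 3 * (x * (x - 1)) * w ^ (s - 3 * x - 2) := by
  have hinv : (fun y => 1 / (c * y ^ (-x))) =ᶠ[𝓝 w] fun y => c⁻¹ * y ^ x :=
    (eventually_gt_nhds hw).mono fun y hy => one_div_const_mul_rpow_neg c x hy
  have hpow : (w ^ (-x)) ^ 4 = w ^ (-4 * x) := by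
    rw [← Real.rpow_natCast, ← Real.rpow_mul hw.le]
    ring_nf
  have hexp : w ^ s * w ^ (-4 * x) * w ^ (x - 2) = w ^ (s - 3 * x - 2) := by
    rw [← Real.rpow_add hw, ← Real.rpow_add hw]
    ring_nf
  rw [kineticFlux, hinv.deriv.deriv_eq, deriv_deriv_const_mul_rpow, mul_pow, hpow, ← hexp]
  rcases eq_or_ne c 0 with rfl | hc
  · simp
  · field_simp

lemma deriv_deriv_kineticFlux_powerLaw (s c x : ℝ) {ω : ℝ} (hω : 0 < ω) :
    deriv (deriv (kineticFlux s fun y => c * y ^ (-x))) ω =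
      c ^ 3 * (x * (x - 1) * ((s - 3 * x - 2) * (s - 3 * x - 2 - 1))) *
        ω ^ (s - 3 * x - 2 - 2) := by
  have hK : kineticFlux s (fun y => c * y ^ (-x)) =ᶠ[𝓝 ω]
      fun w => c ^ 3 * (x * (x - 1)) * w ^ (s - 3 * x - 2) :=
    (eventually_gt_nhds hω).mono fun w hw => kineticFlux_powerLaw s c x hw
  rw [hK.deriv.deriv_eq, deriv_deriv_const_mul_rpow]
  ring

theorem statement3_general (s c x : ℝ)
    (hx : x = 0 ∨ x = 1 ∨ x = (s - 2) / 3 ∨ x = (s - 3) / 3) :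
    ∀ ω : ℝ, 0 < ω →
      deriv (deriv (fun w : ℝ =>
        w ^ s * (c * w ^ (-x)) ^ 4 *
          deriv (deriv (fun y : ℝ => 1 / (c * y ^ (-x)))) w)) ω = 0 := by
  intro ω hω
  have hroot : x * (x - 1) * ((s - 3 * x - 2) * (s - 3 * x - 2 - 1)) = 0 := by
    rcases hx with rfl | rfl | rfl | rfl <;> ring
  change deriv (deriv (kineticFlux s fun y => c * y ^ (-x))) ω = 0
  rw [deriv_deriv_kineticFlux_powerLaw s c x hω, hroot]
  simp

/-- For any `c > 0`, if `x` is one of `0`, `1`, `(s-2)/3`, `(s-3)/3`,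
then the power-law spectrum `n(ω) = c·ω^{-x}` is a stationary solution of the
differential kinetic equation: with `K(ω) = ω^s n(ω)^4 (d²/dω²)(1/n)(ω)` one has
`K'' (ω) = 0` for all `ω > 0`. -/
theorem statement3 (s c x : ℝ) (hc : 0 < c)
    (hx : x = 0 ∨ x = 1 ∨ x = (s - 2) / 3 ∨ x = (s - 3) / 3) :
    ∀ ω : ℝ, 0 < ω →
      deriv (deriv (fun w : ℝ =>
        w ^ s * (c * w ^ (-x)) ^ 4 *
          deriv (deriv (fun y : ℝ => 1 / (c * y ^ (-x)))) w)) ω = 0 :=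
  statement3_general s c x hx
end

section
/- (Minimum principle.) Let k > 1 and let u be a twice differentiable real function on an open interval J satisfying u''(τ) + (2k − 1)·u'(τ) + k(k − 1)·u(τ) = u(τ)^4 on J. Then u cannot attain a local minimum at any interior point τ_min ∈ J at which 0 < u(τ_min) < (k(k − 1))^{1/3}. -/
open Filter Topology

theorem not_isLocalMin_of_deriv_deriv_neg {f : ℝ → ℝ} {x₀ : ℝ} (hc : ContinuousAt f x₀)
    (hf : deriv (deriv f) x₀ < 0) : ¬ IsLocalMin f x₀ := by
  intro hmin
  -- The second-derivative test makes `x₀` also a local maximum, so `f` is locally constant.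
  have hmax : IsLocalMax f x₀ := isLocalMax_of_deriv_deriv_neg hf hmin.deriv_eq_zero hc
  have hconst : f =ᶠ[𝓝 x₀] fun _ ↦ f x₀ := by
    filter_upwards [hmin, hmax] with x hx₁ hx₂ using le_antisymm hx₂ hx₁
  have hderiv : deriv f =ᶠ[𝓝 x₀] fun _ ↦ 0 := by
    filter_upwards [hconst.eventuallyEq_nhds] with x hx
    rw [hx.deriv_eq, deriv_const]
  rw [hderiv.deriv_eq, deriv_const] at hf
  exact hf.false

theorem pow_three_lt_of_lt_rpow_one_div_three {x c : ℝ} (hx : 0 ≤ x) (hc : 0 ≤ c)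
    (h : x < c ^ ((1 : ℝ) / 3)) : x ^ 3 < c := by
  rw [one_div, Real.lt_rpow_inv_iff_of_pos hx hc (by norm_num)] at h
  exact_mod_cast h

theorem statement5_general (k : ℝ) (hk : 1 < k) (a b : ℝ) (u : ℝ → ℝ)
    (hd1 : ∀ τ ∈ Set.Ioo a b, DifferentiableAt ℝ u τ)
    (heq : ∀ τ ∈ Set.Ioo a b,
      deriv (deriv u) τ + (2 * k - 1) * deriv u τ + k * (k - 1) * u τ = u τ ^ 4)
    (τmin : ℝ) (hτ : τmin ∈ Set.Ioo a b)
    (h0 : 0 < u τmin) (h1 : u τmin < (k * (k - 1)) ^ ((1 : ℝ) / 3)) :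
    ¬ IsLocalMin u τmin := by
  intro hmin
  have hcube : u τmin ^ 3 < k * (k - 1) :=
    pow_three_lt_of_lt_rpow_one_div_three h0.le (by nlinarith) h1
  -- At a critical point the equation reads u'' = u (u³ - k(k-1)).
  have hu'' : deriv (deriv u) τmin < 0 := by
    have h := heq τmin hτ
    rw [hmin.deriv_eq_zero] at h
    nlinarith [mul_lt_mul_of_pos_left hcube h0]
  exact not_isLocalMin_of_deriv_deriv_neg (hd1 τmin hτ).continuousAt hu'' hmin

/-- Minimum principle: For `k > 1`, a twice differentiable solution of
`u'' + (2k-1)u' + k(k-1)u = u⁴` on an open interval cannot attain a local minimum at an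
interior point `τmin` at which `0 < u(τmin) < (k(k-1))^{1/3}`. -/
theorem statement5 (k : ℝ) (hk : 1 < k) (a b : ℝ) (u : ℝ → ℝ)
    (hd1 : ∀ τ ∈ Set.Ioo a b, DifferentiableAt ℝ u τ)
    (hd2 : ∀ τ ∈ Set.Ioo a b, DifferentiableAt ℝ (deriv u) τ)
    (heq : ∀ τ ∈ Set.Ioo a b,
      deriv (deriv u) τ + (2 * k - 1) * deriv u τ + k * (k - 1) * u τ = u τ ^ 4)
    (τmin : ℝ) (hτ : τmin ∈ Set.Ioo a b)
    (h0 : 0 < u τmin) (h1 : u τmin < (k * (k - 1)) ^ ((1 : ℝ) / 3)) :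
    ¬ IsLocalMin u τmin :=
  statement5_general k hk a b u hd1 heq τmin hτ h0 h1
end

section
/- (Uniform derivative bound.) Let k > 1 and let u be a twice continuously differentiable function on [0, ∞) satisfying u''(τ) + (2k − 1)·u'(τ) + k(k − 1)·u(τ) = u(τ)^4, with initial data u(0) = u₀ ∈ (0, (k(k − 1))^{1/3}] and u'(0) = 0. Define Φ(w) = k(k − 1)·w²/2 − w⁵/5. Then for every τ ≥ 0 such that u(s) ≥ 0 for all s ∈ [0, τ], one has u'(τ)² ≤ 2·Φ(u₀); in particular u' is uniformly bounded on the set where u remains nonnegative. -/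
/-!
The energy `E = u'² / 2 + Φ(u)` of the damped equation `u'' + (2k - 1) u' = -Φ'(u)` is
nonincreasing, so `u'(τ)² / 2 + Φ(u(τ)) ≤ Φ(u₀)`, and it suffices to know `Φ(u(τ)) ≥ 0`, i.e.
that `u(τ)` lies in `[0, w]` with `w = (k(k-1))^{1/3}`. For the upper bound, note that
`Φ(u₀) ≤ Φ(w)` because `Φ` increases on `[0, w]`, so the energy bound gives
`u'² ≤ 2 (Φ(w) - Φ(u)) = O((u - w)²)` near the critical point `w` of `Φ`. By Grönwall, `u - w`
cannot leave `0` once it reaches it, so `u` never crosses `w`.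
-/

open Set

noncomputable def potential (A w : ℝ) : ℝ := A * w ^ 2 / 2 - w ^ 5 / 5

theorem hasDerivAt_potential (A w : ℝ) : HasDerivAt (potential A) (A * w - w ^ 4) w :=
  ((((hasDerivAt_pow 2 w).const_mul A).div_const 2).sub
    ((hasDerivAt_pow 5 w).div_const 5)).congr_deriv (by push_cast; ring)

theorem potential_nonneg {A x : ℝ} (hx : 0 ≤ x) (hxA : x ^ 3 ≤ A) : 0 ≤ potential A x := by
  unfold potential
  nlinarith [mul_nonneg (sq_nonneg x) (sub_nonneg.2 hxA), pow_nonneg hx 5]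

theorem potential_monotoneOn {A y : ℝ} (hyA : y ^ 3 ≤ A) :
    MonotoneOn (potential A) (Icc 0 y) := by
  have hd := hasDerivAt_potential A
  refine monotoneOn_of_deriv_nonneg (convex_Icc 0 y)
    (fun z _ => (hd z).continuousAt.continuousWithinAt)
    (fun z _ => (hd z).differentiableAt.differentiableWithinAt) ?_
  rw [interior_Icc]
  intro z hz
  have hzA : z ^ 3 ≤ A := (pow_le_pow_left₀ hz.1.le hz.2.le 3).trans hyA
  rw [(hd z).deriv]
  nlinarith [mul_nonneg hz.1.le (sub_nonneg.2 hzA)]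

theorem potential_sub_potential_le {A w v D : ℝ} (hw : 0 ≤ w) (hwA : w ^ 3 = A)
    (hv : |v - w| ≤ D) :
    potential A w - potential A v
      ≤ (3 / 2 * w ^ 3 + 2 * w ^ 2 * D + w * D ^ 2 + D ^ 3 / 5) * (v - w) ^ 2 := by
  have htaylor : potential A w - potential A v
      = 3 / 2 * w ^ 3 * (v - w) ^ 2 + 2 * w ^ 2 * (v - w) ^ 3 + w * (v - w) ^ 4
        + (v - w) ^ 5 / 5 := by
    unfold potential; rw [← hwA]; ring
  have hD : 0 ≤ D := (abs_nonneg _).trans hv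
  have hd : (v - w) ≤ D := (le_abs_self _).trans hv
  have hd2 : (v - w) ^ 2 ≤ D ^ 2 := sq_le_sq' (neg_le_of_abs_le hv) hd
  have hsq := sq_nonneg (v - w)
  have h3 : (v - w) ^ 3 ≤ D * (v - w) ^ 2 := by nlinarith
  have h4 : (v - w) ^ 4 ≤ D ^ 2 * (v - w) ^ 2 := by nlinarith
  have h5 : (v - w) ^ 5 ≤ D ^ 3 * (v - w) ^ 2 := by
    have : (v - w) ^ 3 ≤ D ^ 3 := by nlinarith [mul_le_mul_of_nonneg_left hd2 hD]
    nlinarith [mul_le_mul_of_nonneg_right this hsq]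
  rw [htaylor]
  nlinarith [mul_le_mul_of_nonneg_left h3 (sq_nonneg w), mul_le_mul_of_nonneg_left h4 hw]

section DampedMotion

variable {V V' u : ℝ → ℝ} {c : ℝ}

noncomputable def energy (V u : ℝ → ℝ) (t : ℝ) : ℝ := deriv u t ^ 2 / 2 + V (u t)

theorem hasDerivAt_energy {t : ℝ} (hV : HasDerivAt V (V' (u t)) (u t))
    (hu : DifferentiableAt ℝ u t) (hu' : DifferentiableAt ℝ (deriv u) t)
    (heq : deriv (deriv u) t + c * deriv u t + V' (u t) = 0) :
    HasDerivAt (energy V u) (-c * deriv u t ^ 2) t :=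
  (((hu'.hasDerivAt.pow 2).div_const 2).add (hV.comp t hu.hasDerivAt)).congr_deriv
    (by push_cast; linear_combination deriv u t * heq)

theorem energy_antitoneOn (hc : 0 ≤ c) (hV : ∀ x, HasDerivAt V (V' x) x)
    (hu : ∀ t, 0 ≤ t → DifferentiableAt ℝ u t)
    (hu' : ∀ t, 0 ≤ t → DifferentiableAt ℝ (deriv u) t)
    (heq : ∀ t, 0 ≤ t → deriv (deriv u) t + c * deriv u t + V' (u t) = 0) :
    AntitoneOn (energy V u) (Ici 0) := by
  have hE : ∀ t, 0 ≤ t → HasDerivAt (energy V u) (-c * deriv u t ^ 2) t := fun t ht =>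
    hasDerivAt_energy (hV _) (hu t ht) (hu' t ht) (heq t ht)
  refine antitoneOn_of_deriv_nonpos (convex_Ici 0)
    (fun t ht => (hE t ht).continuousAt.continuousWithinAt) ?_ ?_
  · rw [interior_Ici]
    exact fun t ht => (hE t (le_of_lt ht)).differentiableAt.differentiableWithinAt
  · rw [interior_Ici]
    intro t ht
    rw [(hE t (le_of_lt ht)).deriv]
    nlinarith [sq_nonneg (deriv u t)]

end DampedMotion

theorem abs_deriv_le_of_energy_le {A w D t : ℝ} {u : ℝ → ℝ} (hw : 0 ≤ w) (hwA : w ^ 3 = A)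
    (hE : energy (potential A) u t ≤ potential A w) (hD : |u t - w| ≤ D) :
    |deriv u t|
      ≤ √(2 * (3 / 2 * w ^ 3 + 2 * w ^ 2 * D + w * D ^ 2 + D ^ 3 / 5)) * |u t - w| := by
  have hD0 : 0 ≤ D := (abs_nonneg _).trans hD
  have hsq : deriv u t ^ 2
      ≤ 2 * (3 / 2 * w ^ 3 + 2 * w ^ 2 * D + w * D ^ 2 + D ^ 3 / 5) * (u t - w) ^ 2 := by
    have := potential_sub_potential_le hw hwA hD
    unfold energy at hE
    linarith
  rw [← Real.sqrt_sq_eq_abs, ← Real.sqrt_sq_eq_abs (u t - w), ← Real.sqrt_mul (by positivity)]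
  exact Real.sqrt_le_sqrt hsq

theorem le_of_energy_le_potential {A w : ℝ} {u : ℝ → ℝ} (hw : 0 ≤ w) (hwA : w ^ 3 = A)
    (hu : ∀ t, 0 ≤ t → DifferentiableAt ℝ u t) (h0 : u 0 ≤ w)
    (hE : ∀ t, 0 ≤ t → energy (potential A) u t ≤ potential A w) {t : ℝ} (ht : 0 ≤ t) :
    u t ≤ w := by
  by_contra! hwt
  have hcont : ContinuousOn (fun s => u s - w) (Icc 0 t) := fun s hs =>
    ((hu s hs.1).continuousAt.sub continuousAt_const).continuousWithinAt
  obtain ⟨D, hD⟩ := isCompact_Icc.exists_bound_of_continuousOn hcont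
  obtain ⟨c, hc, huc⟩ := intermediate_value_Icc ht hcont (show (0 : ℝ) ∈ _ from
    ⟨by simpa using h0, by simpa using hwt.le⟩)
  have hsub : Icc c t ⊆ Icc 0 t := Icc_subset_Icc_left hc.1
  have hzero := eq_zero_of_abs_deriv_le_mul_abs_self_of_eq_zero_right (hcont.mono hsub)
    (fun s hs => ((hu s (hc.1.trans hs.1)).hasDerivAt.sub_const w).hasDerivWithinAt) huc
    (fun s hs => abs_deriv_le_of_energy_le hw hwA (hE s (hc.1.trans hs.1))
      (hD s (hsub (Ico_subset_Icc_self hs)))) t ⟨hc.2, le_rfl⟩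
  exact (sub_ne_zero.2 hwt.ne') hzero

theorem statement9_general (k u₀ : ℝ) (hk : 1 < k)
    (hu₀ : 0 < u₀) (hu₀' : u₀ ≤ (k * (k - 1)) ^ ((1 : ℝ) / 3)) (u : ℝ → ℝ)
    (hd1 : ∀ τ : ℝ, 0 ≤ τ → DifferentiableAt ℝ u τ)
    (hd2 : ∀ τ : ℝ, 0 ≤ τ → DifferentiableAt ℝ (deriv u) τ)
    (heq : ∀ τ : ℝ, 0 ≤ τ →
      deriv (deriv u) τ + (2 * k - 1) * deriv u τ + k * (k - 1) * u τ = u τ ^ 4)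
    (hinit : u 0 = u₀) (hinit' : deriv u 0 = 0) :
    ∀ τ : ℝ, 0 ≤ τ → (∀ s ∈ Set.Icc 0 τ, 0 ≤ u s) →
      (deriv u τ) ^ 2 ≤ 2 * (k * (k - 1) * u₀ ^ 2 / 2 - u₀ ^ 5 / 5) := by
  intro τ hτ hpos
  set A := k * (k - 1)
  have hA : 0 < A := mul_pos (by linarith) (by linarith)
  obtain ⟨w, hw, hwA, hu₀w⟩ : ∃ w : ℝ, 0 ≤ w ∧ w ^ 3 = A ∧ u₀ ≤ w := by
    refine ⟨A ^ ((1 : ℝ) / 3), by positivity, ?_, hu₀'⟩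
    rw [← Real.rpow_natCast, ← Real.rpow_mul hA.le]
    norm_num
  have hanti : AntitoneOn (energy (potential A) u) (Ici 0) :=
    energy_antitoneOn (c := 2 * k - 1) (by linarith) (hasDerivAt_potential A) hd1 hd2
      (fun t ht => by linear_combination heq t ht)
  have hE : ∀ t, 0 ≤ t → energy (potential A) u t ≤ potential A u₀ := fun t ht => by
    simpa [energy, hinit, hinit'] using hanti self_mem_Ici ht ht
  have hle : u τ ≤ w := le_of_energy_le_potential hw hwA hd1 (hinit ▸ hu₀w)
    (fun t ht => (hE t ht).trans
      (potential_monotoneOn hwA.le ⟨hu₀.le, hu₀w⟩ ⟨hw, le_rfl⟩ hu₀w)) hτ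
  have huτ : 0 ≤ u τ := hpos τ ⟨hτ, le_rfl⟩
  have hΦ : 0 ≤ potential A (u τ) :=
    potential_nonneg huτ (hwA ▸ pow_le_pow_left₀ huτ hle 3)
  have hEτ := hE τ hτ
  show deriv u τ ^ 2 ≤ 2 * potential A u₀
  unfold energy at hEτ
  linarith

/-- Uniform derivative bound: For `k > 1`, a C² solution of
`u'' + (2k-1)u' + k(k-1)u = u⁴` on `[0,∞)` with `u(0) = u₀ ∈ (0, (k(k-1))^{1/3}]`,
`u'(0) = 0` satisfies `u'(τ)² ≤ 2Φ(u₀)`, with `Φ(w) = k(k-1)w²/2 - w⁵/5`, at every `τ ≥ 0`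
such that `u` stays nonnegative on `[0,τ]`. -/
theorem statement9 (k u₀ : ℝ) (hk : 1 < k)
    (hu₀ : 0 < u₀) (hu₀' : u₀ ≤ (k * (k - 1)) ^ ((1 : ℝ) / 3)) (u : ℝ → ℝ)
    (hd1 : ∀ τ : ℝ, 0 ≤ τ → DifferentiableAt ℝ u τ)
    (hd2 : ∀ τ : ℝ, 0 ≤ τ → DifferentiableAt ℝ (deriv u) τ)
    (hcont : ∀ τ : ℝ, 0 ≤ τ → ContinuousAt (deriv (deriv u)) τ)
    (heq : ∀ τ : ℝ, 0 ≤ τ →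
      deriv (deriv u) τ + (2 * k - 1) * deriv u τ + k * (k - 1) * u τ = u τ ^ 4)
    (hinit : u 0 = u₀) (hinit' : deriv u 0 = 0) :
    ∀ τ : ℝ, 0 ≤ τ → (∀ s ∈ Set.Icc 0 τ, 0 ≤ u s) →
      (deriv u τ) ^ 2 ≤ 2 * (k * (k - 1) * u₀ ^ 2 / 2 - u₀ ^ 5 / 5) :=
  statement9_general k u₀ hk hu₀ hu₀' u hd1 hd2 heq hinit hinit'
end

section
/- (Existence of the separatrix S_{IV,I}.) Let k > 1. There exist v₀ > 0 and a twice continuously differentiable function u : [0, ∞) → ℝ satisfying u''(τ) + (2k − 1)·u'(τ) + k(k − 1)·u(τ) = u(τ)^4 for all τ ≥ 0, such that u(0) = 0, u'(0) = v₀, u is strictly increasing with 0 < u(τ) < (k(k − 1))^{1/3} for all τ > 0, and u(τ) → (k(k − 1))^{1/3}, u'(τ) → 0 as τ → ∞. (This is a stable-manifold orbit of the saddle P2 which crosses the v-axis at a finite point; the corresponding spectrum increases monotonically from zero to the KZ value.) -/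
/-!
Write `a = 2k - 1` and `U³ = k(k - 1)`, so that the equation reads `u'' + a u' = -V'(u)` with
`V(y) = U³ y²/2 - y⁵/5`. Along the separatrix the velocity `v = u'` is a function of the position
`y = u ∈ [0, U]` with `v(U) = 0`, and integrating `d(v²/2)/dy = -a v - V'(y)` from `y` to `U` gives
the integral equation `v(y) = √(2a ∫_y^U v + 2(V(U) - V(y)))`. Its right-hand side is monotone in
`v`, so the iterates starting from `0` increase to a continuous solution. It satisfies
`v(y) ≥ √(U³/2) (U - y)`, which bounds `v'` from below and hence gives `v(y) ≤ L (U - y)`; so the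
arrival time `τ(y) = ∫₀^y dy / v` diverges as `y → U`, and its inverse `u` is defined for all
`τ ≥ 0`, with `u' = v(u)` and `u'' = v'(u) v(u)`, which is the equation. Continuing `v` linearly
for `y < 0` extends `u` to a `C²` function on all of `ℝ`.
-/

open MeasureTheory Real Set Filter Topology

namespace WaveTurbulence

lemma continuous_integral_to {f : ℝ → ℝ} (hf : ∀ a b, IntervalIntegrable f volume a b) (b : ℝ) :
    Continuous fun y => ∫ s in y..b, f s := by
  have : (fun y => ∫ s in y..b, f s) = fun y => -∫ s in b..y, f s := by
    funext y; exact intervalIntegral.integral_symm _ _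
  rw [this]
  exact (intervalIntegral.continuous_primitive hf b).neg

lemma inv_mul_log_le_integral_inv {f : ℝ → ℝ} {x y c L : ℝ} (hxy : x ≤ y) (hyc : y < c)
    (hL : 0 < L) (hf : ContinuousOn f (Icc x y)) (hpos : ∀ s ∈ Icc x y, 0 < f s)
    (hle : ∀ s ∈ Icc x y, f s ≤ L * (c - s)) :
    L⁻¹ * log ((c - x) / (c - y)) ≤ ∫ s in x..y, (f s)⁻¹ := by
  have hcs : ∀ s ∈ Icc x y, 0 < c - s := fun s hs => sub_pos.2 (hs.2.trans_lt hyc)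
  have hprim : ∀ s ∈ uIcc x y,
      HasDerivAt (fun s => -L⁻¹ * log (c - s)) (L⁻¹ * (c - s)⁻¹) s := by
    intro s hs
    rw [uIcc_of_le hxy] at hs
    refine ((((hasDerivAt_id s).const_sub c).log (hcs s hs).ne').const_mul (-L⁻¹)).congr_deriv ?_
    simp only [id]
    field_simp
  have hint : IntervalIntegrable (fun s => L⁻¹ * (c - s)⁻¹) volume x y := by
    refine ContinuousOn.intervalIntegrable ?_
    rw [uIcc_of_le hxy]
    exact continuousOn_const.mul
      ((continuousOn_const.sub continuousOn_id).inv₀ fun s hs => (hcs s hs).ne')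
  have hint' : IntervalIntegrable (fun s => (f s)⁻¹) volume x y := by
    refine ContinuousOn.intervalIntegrable ?_
    rw [uIcc_of_le hxy]
    exact hf.inv₀ fun s hs => (hpos s hs).ne'
  calc L⁻¹ * log ((c - x) / (c - y)) = ∫ s in x..y, L⁻¹ * (c - s)⁻¹ := by
        rw [intervalIntegral.integral_eq_sub_of_hasDerivAt hprim hint,
          log_div (hcs x ⟨le_rfl, hxy⟩).ne' (sub_pos.2 hyc).ne']
        ring
    _ ≤ ∫ s in x..y, (f s)⁻¹ := intervalIntegral.integral_mono_on hxy hint hint' fun s hs => by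
        rw [← mul_inv]
        exact inv_anti₀ (hpos s hs) (hle s hs)

section IntegralEquation

noncomputable def sqrtIntegralOp (c U : ℝ) (g f : ℝ → ℝ) (y : ℝ) : ℝ :=
  √(c * (∫ s in y..U, f s) + g y)

noncomputable def sqrtIntegralIter (c U : ℝ) (g : ℝ → ℝ) (n : ℕ) : ℝ → ℝ :=
  (sqrtIntegralOp c U g)^[n] 0

/-- Evaluating at the projection of `y` onto `[0, U]` makes the solution continuous on `ℝ`. -/
noncomputable def sqrtIntegralSol (c U : ℝ) (g : ℝ → ℝ) (y : ℝ) : ℝ :=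
  ⨆ n, sqrtIntegralIter c U g n (max 0 (min y U))

variable {c U : ℝ} {g : ℝ → ℝ}

lemma continuous_sqrtIntegralOp (hg : Continuous g) {f : ℝ → ℝ}
    (hf : ∀ a b, IntervalIntegrable f volume a b) : Continuous (sqrtIntegralOp c U g f) :=
  ((continuous_const.mul (continuous_integral_to hf U)).add hg).sqrt

lemma sqrtIntegralOp_le_sqrtIntegralOp (hc : 0 ≤ c) {f f' : ℝ → ℝ} (hf : Continuous f)
    (hf' : Continuous f') {y : ℝ} (hyU : y ≤ U) (h : ∀ s ∈ Icc y U, f s ≤ f' s) :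
    sqrtIntegralOp c U g f y ≤ sqrtIntegralOp c U g f' y := by
  have := intervalIntegral.integral_mono_on hyU (hf.intervalIntegrable (μ := volume) _ _)
    (hf'.intervalIntegrable _ _) h
  unfold sqrtIntegralOp
  gcongr

lemma sqrtIntegralIter_succ (n : ℕ) :
    sqrtIntegralIter c U g (n + 1) = sqrtIntegralOp c U g (sqrtIntegralIter c U g n) :=
  Function.iterate_succ_apply' _ _ _

lemma continuous_sqrtIntegralIter (hg : Continuous g) (n : ℕ) :
    Continuous (sqrtIntegralIter c U g n) := by
  induction n with
  | zero => exact continuous_const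
  | succ n ih =>
    rw [sqrtIntegralIter_succ]
    exact continuous_sqrtIntegralOp hg fun _ _ => ih.intervalIntegrable _ _

lemma sqrtIntegralIter_nonneg (n : ℕ) (y : ℝ) : 0 ≤ sqrtIntegralIter c U g n y := by
  cases n with
  | zero => exact le_rfl
  | succ n => rw [sqrtIntegralIter_succ]; exact Real.sqrt_nonneg _

lemma sqrtIntegralIter_le_succ (hc : 0 ≤ c) (hg : Continuous g) (n : ℕ) {y : ℝ}
    (hy : y ∈ Icc 0 U) : sqrtIntegralIter c U g n y ≤ sqrtIntegralIter c U g (n + 1) y := by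
  induction n generalizing y with
  | zero => exact sqrtIntegralIter_nonneg 1 y
  | succ n ih =>
    rw [sqrtIntegralIter_succ, sqrtIntegralIter_succ (n + 1)]
    exact sqrtIntegralOp_le_sqrtIntegralOp hc (continuous_sqrtIntegralIter hg n)
      (continuous_sqrtIntegralIter hg (n + 1)) hy.2 fun s hs => ih ⟨hy.1.trans hs.1, hs.2⟩

/-- With `g ≤ G` on `[0, U]`, the bound `B = c U + √G` satisfies `c U B + G ≤ B²`. -/
lemma exists_sqrtIntegralIter_le (hc : 0 ≤ c) (hg : Continuous g) :
    ∃ B, ∀ n, ∀ y ∈ Icc 0 U, sqrtIntegralIter c U g n y ≤ B := by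
  rcases lt_or_ge U 0 with hU | hU
  · exact ⟨0, fun _ y hy => absurd (hy.1.trans hy.2) hU.not_ge⟩
  obtain ⟨G, hG⟩ := (isCompact_Icc (a := (0 : ℝ)) (b := U)).bddAbove_image hg.continuousOn
  set G' := max G 0
  set B := c * U + √G'
  have hB : 0 ≤ B := add_nonneg (mul_nonneg hc hU) (Real.sqrt_nonneg _)
  have hGB : √G' ≤ B := le_add_of_nonneg_left (mul_nonneg hc hU)
  refine ⟨B, fun n => ?_⟩
  induction n with
  | zero => exact fun _ _ => hB
  | succ n ih =>
    intro y hy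
    have hint : (∫ s in y..U, sqrtIntegralIter c U g n s) ≤ (U - y) * B := by
      have := intervalIntegral.integral_mono_on hy.2
        ((continuous_sqrtIntegralIter hg n).intervalIntegrable (μ := volume) _ _)
        intervalIntegrable_const fun s hs => ih s ⟨hy.1.trans hs.1, hs.2⟩
      rwa [intervalIntegral.integral_const, smul_eq_mul] at this
    have hgy : g y ≤ G' := (hG (mem_image_of_mem g hy)).trans (le_max_left _ _)
    have hsq : √G' * √G' = G' := Real.mul_self_sqrt (le_max_right _ _)
    rw [sqrtIntegralIter_succ, sqrtIntegralOp, Real.sqrt_le_left hB]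
    calc c * (∫ s in y..U, sqrtIntegralIter c U g n s) + g y ≤ c * ((U - y) * B) + G' :=
          add_le_add (mul_le_mul_of_nonneg_left hint hc) hgy
      _ ≤ c * U * B + √G' * B := by
          nlinarith [mul_nonneg (mul_nonneg hc hy.1) hB, mul_le_mul_of_nonneg_left hGB
            (Real.sqrt_nonneg G')]
      _ = B ^ 2 := by ring

lemma max_min_eq_self {y : ℝ} (hy : y ∈ Icc 0 U) : max 0 (min y U) = y := by
  rw [min_eq_left hy.2, max_eq_right hy.1]

lemma max_min_mem (hU : 0 ≤ U) (y : ℝ) : max 0 (min y U) ∈ Icc 0 U :=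
  ⟨le_max_left _ _, max_le hU (min_le_right _ _)⟩

lemma sqrtIntegralSol_eq_iSup {y : ℝ} (hy : y ∈ Icc 0 U) :
    sqrtIntegralSol c U g y = ⨆ n, sqrtIntegralIter c U g n y := by
  rw [sqrtIntegralSol, max_min_eq_self hy]

lemma sqrtIntegralSol_max_min (hU : 0 ≤ U) (y : ℝ) :
    sqrtIntegralSol c U g (max 0 (min y U)) = sqrtIntegralSol c U g y := by
  rw [sqrtIntegralSol, sqrtIntegralSol, max_min_eq_self (max_min_mem hU y)]

lemma sqrtIntegralSol_nonneg (y : ℝ) : 0 ≤ sqrtIntegralSol c U g y :=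
  Real.iSup_nonneg fun n => sqrtIntegralIter_nonneg n _

lemma tendsto_sqrtIntegralIter (hc : 0 ≤ c) (hg : Continuous g) {y : ℝ} (hy : y ∈ Icc 0 U) :
    Tendsto (fun n => sqrtIntegralIter c U g n y) atTop (𝓝 (sqrtIntegralSol c U g y)) := by
  obtain ⟨B, hB⟩ := exists_sqrtIntegralIter_le hc hg (c := c) (U := U)
  rw [sqrtIntegralSol_eq_iSup hy]
  exact tendsto_atTop_ciSup (monotone_nat_of_le_succ fun n => sqrtIntegralIter_le_succ hc hg n hy)
    ⟨B, by rintro _ ⟨n, rfl⟩; exact hB n y hy⟩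

lemma exists_sqrtIntegralSol_le (hc : 0 ≤ c) (hg : Continuous g) (hU : 0 ≤ U) :
    ∃ B, ∀ y, sqrtIntegralSol c U g y ≤ B := by
  obtain ⟨B, hB⟩ := exists_sqrtIntegralIter_le hc hg (c := c) (U := U)
  exact ⟨B, fun y => ciSup_le fun n => hB n _ (max_min_mem hU y)⟩

lemma intervalIntegrable_sqrtIntegralSol (hc : 0 ≤ c) (hg : Continuous g) (hU : 0 ≤ U)
    (a b : ℝ) : IntervalIntegrable (sqrtIntegralSol c U g) volume a b := by
  obtain ⟨B, hB⟩ := exists_sqrtIntegralSol_le hc hg hU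
  have hmeas : Measurable (sqrtIntegralSol c U g) := by
    refine measurable_of_tendsto_metrizable
      (f := fun n y => sqrtIntegralIter c U g n (max 0 (min y U)))
      (fun n => ((continuous_sqrtIntegralIter hg n).comp
        (continuous_const.max (continuous_id.min continuous_const))).measurable)
      (tendsto_pi_nhds.2 fun y => ?_)
    have := tendsto_sqrtIntegralIter hc hg (max_min_mem hU y)
    rwa [sqrtIntegralSol_max_min hU] at this
  refine IntervalIntegrable.mono_fun' (g := fun _ => B) intervalIntegrable_const
    hmeas.aestronglyMeasurable (Eventually.of_forall fun y => ?_)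
  change ‖sqrtIntegralSol c U g y‖ ≤ B
  rw [Real.norm_eq_abs, abs_of_nonneg (sqrtIntegralSol_nonneg y)]
  exact hB y

/-- Pass to the limit in `sqrtIntegralIter_succ`, by dominated convergence. -/
lemma sqrtIntegralSol_eq (hc : 0 ≤ c) (hg : Continuous g) {y : ℝ} (hy : y ∈ Icc 0 U) :
    sqrtIntegralSol c U g y = sqrtIntegralOp c U g (sqrtIntegralSol c U g) y := by
  obtain ⟨B, hB⟩ := exists_sqrtIntegralIter_le hc hg (c := c) (U := U)
  have hsub : ∀ s ∈ uIoc y U, s ∈ Icc 0 U := fun s hs => by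
    rw [uIoc_of_le hy.2] at hs
    exact ⟨hy.1.trans hs.1.le, hs.2⟩
  have hint : Tendsto (fun n => ∫ s in y..U, sqrtIntegralIter c U g n s) atTop
      (𝓝 (∫ s in y..U, sqrtIntegralSol c U g s)) := by
    refine intervalIntegral.tendsto_integral_filter_of_dominated_convergence (fun _ => B)
      (Eventually.of_forall fun n => (continuous_sqrtIntegralIter hg n).aestronglyMeasurable)
      (Eventually.of_forall fun n => ae_of_all _ fun s hs => ?_) intervalIntegrable_const
      (ae_of_all _ fun s hs => tendsto_sqrtIntegralIter hc hg (hsub s hs))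
    rw [Real.norm_eq_abs, abs_of_nonneg (sqrtIntegralIter_nonneg n s)]
    exact hB n s (hsub s hs)
  have hop : Tendsto (fun n => sqrtIntegralIter c U g (n + 1) y) atTop
      (𝓝 (sqrtIntegralOp c U g (sqrtIntegralSol c U g) y)) := by
    simp_rw [sqrtIntegralIter_succ]
    exact ((hint.const_mul c).add_const (g y)).sqrt
  exact tendsto_nhds_unique ((tendsto_sqrtIntegralIter hc hg hy).comp (tendsto_add_atTop_nat 1)) hop

lemma continuous_sqrtIntegralSol (hc : 0 ≤ c) (hg : Continuous g) (hU : 0 ≤ U) :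
    Continuous (sqrtIntegralSol c U g) := by
  have hop : ContinuousOn (sqrtIntegralSol c U g) (Icc 0 U) :=
    (continuous_sqrtIntegralOp hg (intervalIntegrable_sqrtIntegralSol hc hg hU)).continuousOn.congr
      fun y hy => sqrtIntegralSol_eq hc hg hy
  exact (hop.comp_continuous (continuous_const.max (continuous_id.min continuous_const))
    (max_min_mem hU)).congr (sqrtIntegralSol_max_min hU)

lemma sqrt_le_sqrtIntegralSol (hc : 0 ≤ c) (hg : Continuous g) {y : ℝ} (hy : y ∈ Icc 0 U) :
    √(g y) ≤ sqrtIntegralSol c U g y := by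
  have : 0 ≤ ∫ s in y..U, sqrtIntegralSol c U g s :=
    intervalIntegral.integral_nonneg hy.2 fun s _ => sqrtIntegralSol_nonneg s
  rw [sqrtIntegralSol_eq hc hg hy, sqrtIntegralOp]
  exact Real.sqrt_le_sqrt (le_add_of_nonneg_left (mul_nonneg hc this))

lemma hasDerivWithinAt_sqrtIntegralSol (hc : 0 ≤ c) (hg : Continuous g) {y g' : ℝ}
    (hy : y ∈ Icc 0 U) (hpos : 0 < sqrtIntegralSol c U g y) (hg' : HasDerivAt g g' y) :
    HasDerivWithinAt (sqrtIntegralSol c U g)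
      ((g' - c * sqrtIntegralSol c U g y) / (2 * sqrtIntegralSol c U g y)) (Icc 0 U) y := by
  set φ := sqrtIntegralSol c U g
  have hφ := continuous_sqrtIntegralSol hc hg (hy.1.trans hy.2)
  have hint : HasDerivAt (fun z => ∫ s in z..U, φ s) (-φ y) y :=
    intervalIntegral.integral_hasDerivAt_left (hφ.intervalIntegrable _ _)
      hφ.stronglyMeasurable.stronglyMeasurableAtFilter hφ.continuousAt
  have hval : √(c * (∫ s in y..U, φ s) + g y) = φ y := (sqrtIntegralSol_eq hc hg hy).symm
  have hne : c * (∫ s in y..U, φ s) + g y ≠ 0 := fun h => by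
    rw [h, Real.sqrt_zero] at hval
    exact hpos.ne hval
  refine ((((hint.const_mul c).add hg').sqrt hne).hasDerivWithinAt.congr
    (fun z hz => sqrtIntegralSol_eq hc hg hz) (sqrtIntegralSol_eq hc hg hy)).congr_deriv ?_
  rw [Pi.add_apply, hval]
  ring

end IntegralEquation

section Velocity

noncomputable def potential (U y : ℝ) : ℝ := U ^ 3 * y ^ 2 / 2 - y ^ 5 / 5

noncomputable def velocity (a U : ℝ) : ℝ → ℝ :=
  sqrtIntegralSol (2 * a) U fun y => 2 * (potential U U - potential U y)

variable {a U : ℝ}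

lemma hasDerivAt_potential (U y : ℝ) : HasDerivAt (potential U) (U ^ 3 * y - y ^ 4) y := by
  have h : HasDerivAt (fun y => U ^ 3 * y ^ 2 / 2 - y ^ 5 / 5)
      (U ^ 3 * (2 * y ^ 1) / 2 - 5 * y ^ 4 / 5) y :=
    (((hasDerivAt_pow 2 y).const_mul (U ^ 3)).div_const 2).sub ((hasDerivAt_pow 5 y).div_const 5)
  exact h.congr_deriv (by ring)

lemma continuous_potential_drop (U : ℝ) :
    Continuous fun y => 2 * (potential U U - potential U y) := by
  unfold potential
  fun_prop

lemma sq_mul_le_potential_drop {y : ℝ} (hy : y ∈ Icc 0 U) :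
    U ^ 3 / 2 * (U - y) ^ 2 ≤ 2 * (potential U U - potential U y) := by
  have hU : 0 ≤ U := hy.1.trans hy.2
  have : 0 ≤ (U - y) ^ 2 * (4 * y ^ 3 + 8 * y ^ 2 * U + 12 * y * U ^ 2 + U ^ 3) / 10 := by
    have := hy.1
    positivity
  unfold potential
  linarith

lemma continuous_velocity (ha : 0 ≤ a) (hU : 0 ≤ U) : Continuous (velocity a U) :=
  continuous_sqrtIntegralSol (by positivity) (continuous_potential_drop U) hU

lemma velocity_self (ha : 0 ≤ a) (hU : 0 ≤ U) : velocity a U U = 0 := by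
  rw [velocity, sqrtIntegralSol_eq (by positivity) (continuous_potential_drop U) ⟨hU, le_rfl⟩]
  simp [sqrtIntegralOp]

lemma mul_sub_le_velocity (ha : 0 ≤ a) {y : ℝ} (hy : y ∈ Icc 0 U) :
    √(U ^ 3 / 2) * (U - y) ≤ velocity a U y := by
  have hU : 0 ≤ U := hy.1.trans hy.2
  calc √(U ^ 3 / 2) * (U - y) = √(U ^ 3 / 2 * (U - y) ^ 2) := by
        rw [Real.sqrt_mul (by positivity), Real.sqrt_sq (sub_nonneg.2 hy.2)]
    _ ≤ √(2 * (potential U U - potential U y)) := Real.sqrt_le_sqrt (sq_mul_le_potential_drop hy)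
    _ ≤ velocity a U y :=
        sqrt_le_sqrtIntegralSol (by positivity) (continuous_potential_drop U) hy

lemma velocity_pos (ha : 0 ≤ a) {y : ℝ} (hy : y ∈ Ico 0 U) : 0 < velocity a U y := by
  have hU : 0 < U := hy.1.trans_lt hy.2
  exact lt_of_lt_of_le (by have := sub_pos.2 hy.2; positivity)
    (mul_sub_le_velocity ha (Ico_subset_Icc_self hy))

lemma hasDerivWithinAt_velocity (ha : 0 ≤ a) {y : ℝ} (hy : y ∈ Ico 0 U) :
    HasDerivWithinAt (velocity a U) (-a - (U ^ 3 * y - y ^ 4) / velocity a U y) (Icc 0 U) y := by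
  have hpos := velocity_pos ha hy
  refine (hasDerivWithinAt_sqrtIntegralSol (by positivity) (continuous_potential_drop U)
    (Ico_subset_Icc_self hy) hpos
    (((hasDerivAt_potential U y).const_sub _).const_mul 2)).congr_deriv ?_
  rw [velocity] at hpos ⊢
  field_simp
  ring

lemma mul_sub_pow_le {y : ℝ} (hy : y ∈ Icc 0 U) : U ^ 3 * y - y ^ 4 ≤ 3 * U ^ 3 * (U - y) := by
  have hU : 0 ≤ U := hy.1.trans hy.2
  have : y * (U ^ 2 + U * y + y ^ 2) ≤ U * (U ^ 2 + U * U + U ^ 2) :=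
    mul_le_mul hy.2 (by gcongr <;> linarith [hy.1, hy.2]) (by have := hy.1; positivity) hU
  calc U ^ 3 * y - y ^ 4 = (U - y) * (y * (U ^ 2 + U * y + y ^ 2)) := by ring
    _ ≤ (U - y) * (U * (U ^ 2 + U * U + U ^ 2)) := by gcongr; exact sub_nonneg.2 hy.2
    _ = 3 * U ^ 3 * (U - y) := by ring

lemma neg_le_velocity_slope (ha : 0 ≤ a) {y : ℝ} (hy : y ∈ Ico 0 U) :
    -(a + 3 * U ^ 3 / √(U ^ 3 / 2)) ≤ -a - (U ^ 3 * y - y ^ 4) / velocity a U y := by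
  have hU : 0 < U := hy.1.trans_lt hy.2
  have hm : 0 < √(U ^ 3 / 2) := Real.sqrt_pos.2 (by positivity)
  have hv := velocity_pos ha hy
  have : (U ^ 3 * y - y ^ 4) / velocity a U y ≤ 3 * U ^ 3 / √(U ^ 3 / 2) := by
    rw [div_le_div_iff₀ hv hm]
    calc (U ^ 3 * y - y ^ 4) * √(U ^ 3 / 2) ≤ 3 * U ^ 3 * (√(U ^ 3 / 2) * (U - y)) := by
          nlinarith [mul_sub_pow_le (Ico_subset_Icc_self hy)]
      _ ≤ 3 * U ^ 3 * velocity a U y := by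
          gcongr
          exact mul_sub_le_velocity ha (Ico_subset_Icc_self hy)
  linarith

/-- Integrate the slope bound `neg_le_velocity_slope` back from `velocity a U U = 0`. -/
lemma velocity_le_mul_sub (ha : 0 ≤ a) (hU : 0 < U) {y : ℝ} (hy : y ∈ Icc 0 U) :
    velocity a U y ≤ (a + 3 * U ^ 3 / √(U ^ 3 / 2)) * (U - y) := by
  have hderiv : ∀ z ∈ interior (Icc y U), HasDerivAt (velocity a U)
      (-a - (U ^ 3 * z - z ^ 4) / velocity a U z) z := fun z hz => by
    rw [interior_Icc] at hz
    exact (hasDerivWithinAt_velocity ha ⟨hy.1.trans hz.1.le, hz.2⟩).hasDerivAt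
      (Icc_mem_nhds (hy.1.trans_lt hz.1) hz.2)
  have := (convex_Icc y U).mul_sub_le_image_sub_of_le_deriv
    (continuous_velocity ha hU.le).continuousOn
    (fun z hz => (hderiv z hz).differentiableAt.differentiableWithinAt)
    (fun z hz => by
      rw [(hderiv z hz).deriv]
      rw [interior_Icc] at hz
      exact neg_le_velocity_slope ha ⟨hy.1.trans hz.1.le, hz.2⟩)
    y ⟨le_rfl, hy.2⟩ U ⟨hy.2, le_rfl⟩ hy.2
  rw [velocity_self ha hU.le] at this
  linarith

end Velocity

section ArrivalTime

/-- Below `0` the velocity is continued by the line of slope `-a`, matching the one-sided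
derivative of `velocity a U` at `0`. -/
noncomputable def extVelocity (a U y : ℝ) : ℝ :=
  if y ≤ 0 then velocity a U 0 - a * y else velocity a U y

noncomputable def extVelocityDeriv (a U y : ℝ) : ℝ :=
  -a - (U ^ 3 * max y 0 - max y 0 ^ 4) / velocity a U (max y 0)

noncomputable def arrivalTime (a U y : ℝ) : ℝ := ∫ s in 0..y, (extVelocity a U s)⁻¹

variable {a U : ℝ}

lemma extVelocity_of_nonneg {y : ℝ} (hy : 0 ≤ y) : extVelocity a U y = velocity a U y := by
  unfold extVelocity
  split_ifs with h
  · rw [le_antisymm h hy, mul_zero, sub_zero]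
  · rfl

lemma extVelocityDeriv_of_nonpos {y : ℝ} (hy : y ≤ 0) : extVelocityDeriv a U y = -a := by
  simp [extVelocityDeriv, max_eq_right hy]

lemma extVelocityDeriv_of_nonneg {y : ℝ} (hy : 0 ≤ y) :
    extVelocityDeriv a U y = -a - (U ^ 3 * y - y ^ 4) / velocity a U y := by
  simp [extVelocityDeriv, max_eq_left hy]

lemma continuous_extVelocity (ha : 0 ≤ a) (hU : 0 ≤ U) : Continuous (extVelocity a U) :=
  Continuous.if_le (by fun_prop) (continuous_velocity ha hU) continuous_id continuous_const
    fun y hy => by rw [hy, mul_zero, sub_zero]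

lemma extVelocity_pos (ha : 0 ≤ a) (hU : 0 < U) {y : ℝ} (hy : y < U) : 0 < extVelocity a U y := by
  rcases le_or_gt y 0 with h | h
  · rw [extVelocity, if_pos h]
    have := velocity_pos ha ⟨le_rfl, hU⟩
    nlinarith
  · rw [extVelocity_of_nonneg h.le]
    exact velocity_pos ha ⟨h.le, hy⟩

lemma hasDerivAt_extVelocity (ha : 0 ≤ a) (hU : 0 < U) {y : ℝ} (hy : y < U) :
    HasDerivAt (extVelocity a U) (extVelocityDeriv a U y) y := by
  have hline : ∀ z, HasDerivAt (fun z => velocity a U 0 - a * z) (-a) z := fun z => by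
    simpa using ((hasDerivAt_id z).const_mul a).const_sub (velocity a U 0)
  rcases lt_trichotomy y 0 with h | rfl | h
  · rw [extVelocityDeriv_of_nonpos h.le]
    exact (hline y).congr_of_eventuallyEq
      (eventually_of_mem (Iic_mem_nhds h) fun z hz => if_pos hz)
  · have hright : HasDerivWithinAt (extVelocity a U) (-a) (Ici 0) 0 := by
      have := (hasDerivWithinAt_velocity ha ⟨le_rfl, hU⟩).mono_of_mem_nhdsWithin
        (Icc_mem_nhdsGE hU)
      simp only [ne_eq, OfNat.ofNat_ne_zero, not_false_eq_true, zero_pow, mul_zero, sub_zero,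
        zero_div] at this
      exact this.congr (fun z hz => extVelocity_of_nonneg hz) (extVelocity_of_nonneg le_rfl)
    have hleft : HasDerivWithinAt (extVelocity a U) (-a) (Iic 0) 0 :=
      (hline 0).hasDerivWithinAt.congr (fun z hz => if_pos hz) (if_pos le_rfl)
    rw [extVelocityDeriv_of_nonpos le_rfl, ← hasDerivWithinAt_univ, ← Iic_union_Ici]
    exact hleft.union hright
  · rw [extVelocityDeriv_of_nonneg h.le]
    exact ((hasDerivWithinAt_velocity ha ⟨h.le, hy⟩).hasDerivAt
      (Icc_mem_nhds h hy)).congr_of_eventuallyEq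
      (eventually_of_mem (Ioi_mem_nhds h) fun z hz => extVelocity_of_nonneg (le_of_lt hz))

lemma continuousAt_extVelocityDeriv (ha : 0 ≤ a) (hU : 0 < U) {y : ℝ} (hy : y < U) :
    ContinuousAt (extVelocityDeriv a U) y := by
  have hmax : Continuous fun z : ℝ => max z 0 := continuous_id.max continuous_const
  have hne : velocity a U (max y 0) ≠ 0 := (velocity_pos ha ⟨le_max_right _ _, max_lt hy hU⟩).ne'
  exact continuousAt_const.sub (((continuous_const.mul hmax).sub (hmax.pow 4)).continuousAt.div
    ((continuous_velocity ha hU.le).comp hmax).continuousAt hne)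

lemma extVelocityDeriv_mul_add (ha : 0 ≤ a) {y : ℝ} (hy : y ∈ Ico 0 U) :
    extVelocityDeriv a U y * extVelocity a U y + a * extVelocity a U y + U ^ 3 * y = y ^ 4 := by
  have := (velocity_pos ha hy).ne'
  rw [extVelocityDeriv_of_nonneg hy.1, extVelocity_of_nonneg hy.1]
  field_simp
  ring

lemma continuousOn_inv_extVelocity (ha : 0 ≤ a) (hU : 0 < U) :
    ContinuousOn (fun s => (extVelocity a U s)⁻¹) (Iio U) :=
  (continuous_extVelocity ha hU.le).continuousOn.inv₀ fun _ hs => (extVelocity_pos ha hU hs).ne'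

lemma hasDerivAt_arrivalTime (ha : 0 ≤ a) (hU : 0 < U) {y : ℝ} (hy : y < U) :
    HasDerivAt (arrivalTime a U) (extVelocity a U y)⁻¹ y :=
  intervalIntegral.integral_hasDerivAt_right
    (((continuousOn_inv_extVelocity ha hU).mono
      (ordConnected_Iio.uIcc_subset hU hy)).intervalIntegrable)
    ((continuousOn_inv_extVelocity ha hU).stronglyMeasurableAtFilter isOpen_Iio y hy)
    ((continuousOn_inv_extVelocity ha hU).continuousAt (Iio_mem_nhds hy))

lemma strictMonoOn_arrivalTime (ha : 0 ≤ a) (hU : 0 < U) : StrictMonoOn (arrivalTime a U) (Iio U) :=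
  strictMonoOn_of_deriv_pos (convex_Iio U)
    (fun _ hy => (hasDerivAt_arrivalTime ha hU hy).continuousAt.continuousWithinAt)
    fun y hy => by
      rw [interior_Iio] at hy
      rw [(hasDerivAt_arrivalTime ha hU hy).deriv]
      exact inv_pos.2 (extVelocity_pos ha hU hy)

lemma exists_le_arrivalTime (ha : 0 ≤ a) (hU : 0 < U) (M : ℝ) :
    ∃ y < U, M ≤ arrivalTime a U y := by
  set L := a + 3 * U ^ 3 / √(U ^ 3 / 2)
  have hL : 0 < L := by positivity
  set T := max M 0
  have hexp : exp (-(L * T)) ≤ 1 :=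
    exp_le_one_iff.2 (neg_nonpos.2 (mul_nonneg hL.le (le_max_right _ _)))
  set y := U - U * exp (-(L * T))
  have hy0 : 0 ≤ y := by nlinarith
  have hyU : y < U := by have := exp_pos (-(L * T)); nlinarith
  refine ⟨y, hyU, ?_⟩
  have := inv_mul_log_le_integral_inv hy0 hyU hL (continuous_extVelocity ha hU.le).continuousOn
    (fun s hs => extVelocity_pos ha hU (hs.2.trans_lt hyU)) fun s hs => by
      rw [extVelocity_of_nonneg hs.1]
      exact velocity_le_mul_sub ha hU ⟨hs.1, hs.2.trans hyU.le⟩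
  have hlog : log ((U - 0) / (U - y)) = L * T := by
    rw [show U - y = U * exp (-(L * T)) by ring, sub_zero, div_mul_cancel_left₀ hU.ne', ← exp_neg,
      log_exp, neg_neg]
  rw [hlog, inv_mul_cancel_left₀ hL.ne'] at this
  exact (le_max_left M 0).trans this

lemma exists_arrivalTime_le (ha : 0 < a) (hU : 0 < U) (M : ℝ) :
    ∃ y < U, arrivalTime a U y ≤ M := by
  set v₀ := velocity a U 0
  have hv₀ : 0 < v₀ := velocity_pos ha.le ⟨le_rfl, hU⟩
  set T := max (-M) 0
  have hexp : 1 ≤ exp (a * T) := one_le_exp (mul_nonneg ha.le (le_max_right _ _))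
  set y := v₀ / a * (1 - exp (a * T))
  have hy0 : y ≤ 0 := mul_nonpos_of_nonneg_of_nonpos (by positivity) (by linarith)
  refine ⟨y, hy0.trans_lt hU, ?_⟩
  have := inv_mul_log_le_integral_inv hy0 (div_pos hv₀ ha) ha
    (continuous_extVelocity ha.le hU.le).continuousOn
    (fun s hs => extVelocity_pos ha.le hU (hs.2.trans_lt hU)) fun s hs => by
      rw [extVelocity, if_pos hs.2]
      field_simp
      rfl
  have hlog : log ((v₀ / a - y) / (v₀ / a - 0)) = a * T := by
    rw [show v₀ / a - y = v₀ / a * exp (a * T) by ring, sub_zero,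
      mul_div_cancel_left₀ _ (div_pos hv₀ ha).ne', log_exp]
  rw [hlog, inv_mul_cancel_left₀ ha.ne', intervalIntegral.integral_symm] at this
  unfold arrivalTime
  linarith [le_max_left (-M) 0]

lemma surjOn_arrivalTime (ha : 0 < a) (hU : 0 < U) : SurjOn (arrivalTime a U) (Iio U) univ := by
  intro τ _
  obtain ⟨y₁, hy₁, h₁⟩ := exists_arrivalTime_le ha hU τ
  obtain ⟨y₂, hy₂, h₂⟩ := exists_le_arrivalTime ha.le hU τ
  have hsub : uIcc y₁ y₂ ⊆ Iio U := ordConnected_Iio.uIcc_subset hy₁ hy₂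
  obtain ⟨y, hy, rfl⟩ := intermediate_value_uIcc
    (fun z hz => (hasDerivAt_arrivalTime ha.le hU (hsub hz)).continuousAt.continuousWithinAt)
    (mem_uIcc_of_le h₁ h₂)
  exact ⟨y, hsub hy, rfl⟩

end ArrivalTime

section Separatrix

noncomputable def separatrix (a U : ℝ) : ℝ → ℝ := Function.invFunOn (arrivalTime a U) (Iio U)

variable {a U : ℝ} (ha : 0 < a) (hU : 0 < U)
include ha hU

lemma separatrix_lt (τ : ℝ) : separatrix a U τ < U :=
  Function.invFunOn_mem (surjOn_arrivalTime ha hU (mem_univ τ))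

lemma arrivalTime_separatrix (τ : ℝ) : arrivalTime a U (separatrix a U τ) = τ :=
  Function.invFunOn_eq (surjOn_arrivalTime ha hU (mem_univ τ))

lemma separatrix_arrivalTime {y : ℝ} (hy : y < U) : separatrix a U (arrivalTime a U y) = y :=
  (strictMonoOn_arrivalTime ha.le hU).injOn (separatrix_lt ha hU _) hy
    (arrivalTime_separatrix ha hU _)

lemma separatrix_zero : separatrix a U 0 = 0 := by
  simpa [arrivalTime] using separatrix_arrivalTime ha hU hU

lemma strictMono_separatrix : StrictMono (separatrix a U) := fun τ τ' h => by
  rwa [← (strictMonoOn_arrivalTime ha.le hU).lt_iff_lt (separatrix_lt ha hU τ)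
    (separatrix_lt ha hU τ'), arrivalTime_separatrix ha hU, arrivalTime_separatrix ha hU]

lemma continuous_separatrix : Continuous (separatrix a U) :=
  continuous_iff_continuousAt.2 fun τ => continuousAt_of_monotoneOn_of_image_mem_nhds
    ((strictMono_separatrix ha hU).monotone.monotoneOn univ) univ_mem
    (mem_of_superset (Iio_mem_nhds (separatrix_lt ha hU τ)) fun y hy =>
      ⟨arrivalTime a U y, mem_univ _, separatrix_arrivalTime ha hU hy⟩)

lemma hasDerivAt_separatrix (τ : ℝ) :
    HasDerivAt (separatrix a U) (extVelocity a U (separatrix a U τ)) τ := by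
  simpa using HasDerivAt.of_local_left_inverse (continuous_separatrix ha hU).continuousAt
    (hasDerivAt_arrivalTime ha.le hU (separatrix_lt ha hU τ))
    (inv_ne_zero (extVelocity_pos ha.le hU (separatrix_lt ha hU τ)).ne')
    (Eventually.of_forall (arrivalTime_separatrix ha hU))

lemma deriv_separatrix : deriv (separatrix a U) = fun τ => extVelocity a U (separatrix a U τ) :=
  funext fun τ => (hasDerivAt_separatrix ha hU τ).deriv

lemma hasDerivAt_deriv_separatrix (τ : ℝ) :
    HasDerivAt (deriv (separatrix a U))
      (extVelocityDeriv a U (separatrix a U τ) * extVelocity a U (separatrix a U τ)) τ := by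
  rw [deriv_separatrix ha hU]
  exact (hasDerivAt_extVelocity ha.le hU (separatrix_lt ha hU τ)).comp τ
    (hasDerivAt_separatrix ha hU τ)

lemma continuous_deriv_deriv_separatrix : Continuous (deriv (deriv (separatrix a U))) := by
  rw [show deriv (deriv (separatrix a U)) = _ from
    funext fun τ => (hasDerivAt_deriv_separatrix ha hU τ).deriv]
  exact continuous_iff_continuousAt.2 fun τ =>
    ((continuousAt_extVelocityDeriv ha.le hU (separatrix_lt ha hU τ)).comp
      (continuous_separatrix ha hU).continuousAt).mul
    ((continuous_extVelocity ha.le hU.le).comp (continuous_separatrix ha hU)).continuousAt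

lemma separatrix_ode {τ : ℝ} (hτ : 0 ≤ τ) :
    deriv (deriv (separatrix a U)) τ + a * deriv (separatrix a U) τ + U ^ 3 * separatrix a U τ =
      separatrix a U τ ^ 4 := by
  have hnonneg : 0 ≤ separatrix a U τ :=
    separatrix_zero ha hU ▸ (strictMono_separatrix ha hU).monotone hτ
  rw [(hasDerivAt_deriv_separatrix ha hU τ).deriv, deriv_separatrix ha hU]
  exact extVelocityDeriv_mul_add ha.le ⟨hnonneg, separatrix_lt ha hU τ⟩

lemma tendsto_separatrix_atTop : Tendsto (separatrix a U) atTop (𝓝 U) := by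
  refine tendsto_order.2 ⟨fun b hb => ?_,
    fun b hb => Eventually.of_forall fun τ => (separatrix_lt ha hU τ).trans hb⟩
  filter_upwards [eventually_gt_atTop (arrivalTime a U b)] with τ hτ
  simpa [separatrix_arrivalTime ha hU hb] using strictMono_separatrix ha hU hτ

lemma tendsto_deriv_separatrix_atTop : Tendsto (deriv (separatrix a U)) atTop (𝓝 0) := by
  have := ((continuous_extVelocity ha.le hU.le).tendsto U).comp (tendsto_separatrix_atTop ha hU)
  rw [extVelocity_of_nonneg hU.le, velocity_self ha.le hU.le] at this
  rw [deriv_separatrix ha hU]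
  exact this

end Separatrix

end WaveTurbulence

open WaveTurbulence in
/-- Existence of the separatrix S_{IV,I}: For `k > 1` there exist `v₀ > 0`
and a C² function `u` solving `u'' + (2k-1)u' + k(k-1)u = u⁴` on `[0,∞)` with `u(0) = 0`,
`u'(0) = v₀`, `u` strictly increasing, `0 < u(τ) < (k(k-1))^{1/3}` for `τ > 0`, and
`u(τ) → (k(k-1))^{1/3}`, `u'(τ) → 0` as `τ → ∞`. -/
theorem statement12 (k : ℝ) (hk : 1 < k) :
    ∃ v₀ : ℝ, 0 < v₀ ∧
    ∃ u : ℝ → ℝ,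
      (∀ τ : ℝ, 0 ≤ τ → DifferentiableAt ℝ u τ) ∧
      (∀ τ : ℝ, 0 ≤ τ → DifferentiableAt ℝ (deriv u) τ) ∧
      (∀ τ : ℝ, 0 ≤ τ → ContinuousAt (deriv (deriv u)) τ) ∧
      (∀ τ : ℝ, 0 ≤ τ →
        deriv (deriv u) τ + (2 * k - 1) * deriv u τ + k * (k - 1) * u τ = u τ ^ 4) ∧
      u 0 = 0 ∧ deriv u 0 = v₀ ∧
      StrictMonoOn u (Set.Ici 0) ∧
      (∀ τ : ℝ, 0 < τ → 0 < u τ ∧ u τ < (k * (k - 1)) ^ ((1 : ℝ) / 3)) ∧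
      Filter.Tendsto u Filter.atTop (nhds ((k * (k - 1)) ^ ((1 : ℝ) / 3))) ∧
      Filter.Tendsto (deriv u) Filter.atTop (nhds 0) := by
  have hK : 0 < k * (k - 1) := by nlinarith
  set U := (k * (k - 1)) ^ ((1 : ℝ) / 3)
  have ha : 0 < 2 * k - 1 := by linarith
  have hU : 0 < U := rpow_pos_of_pos hK _
  have hU3 : U ^ 3 = k * (k - 1) := by
    rw [← rpow_natCast, ← rpow_mul hK.le]
    norm_num
  have hzero := separatrix_zero ha hU
  have hmono := strictMono_separatrix ha hU
  refine ⟨deriv (separatrix (2 * k - 1) U) 0, ?_, separatrix (2 * k - 1) U,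
    fun τ _ => (hasDerivAt_separatrix ha hU τ).differentiableAt,
    fun τ _ => (hasDerivAt_deriv_separatrix ha hU τ).differentiableAt,
    fun τ _ => (continuous_deriv_deriv_separatrix ha hU).continuousAt,
    fun τ hτ => hU3 ▸ separatrix_ode ha hU hτ, hzero, rfl, hmono.strictMonoOn _,
    fun τ hτ => ⟨hzero ▸ hmono hτ, separatrix_lt ha hU τ⟩,
    tendsto_separatrix_atTop ha hU, tendsto_deriv_separatrix_atTop ha hU⟩
  rw [(hasDerivAt_separatrix ha hU 0).deriv, hzero]
  exact extVelocity_pos ha.le hU hU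
end

section
/- Let k > 1 and u₀ > (k(k − 1))^{1/3}. Let u be the maximal forward solution of u''(τ) + (2k − 1)·u'(τ) + k(k − 1)·u(τ) = u(τ)^4 with u(0) = u₀ and u'(0) = 0, defined on its maximal interval of existence [0, T_max). Then u is unbounded: sup over τ ∈ [0, T_max) of u(τ) = +∞. In particular u does not converge to any constant. -/
/-!
With `a = 2k - 1`, `b = k(k - 1)` and `c = b^{1/3}`, the forcing `u⁴ - b u` is positive for
`u > c`, and the integrating factor gives `(e^{aτ} u')' = e^{aτ} (u⁴ - b u)`. So while `u > c`
the velocity `u'` is positive and `u` increases from `u₀ > c`: the solution never returns to `c`,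
and `u' ≥ 0`, `u ≥ u₀` throughout. Suppose `u ≤ M`. On `[0, ∞)` the equation then gives
`u'' + a u' ≥ u₀⁴ - b u₀ > 0`, which makes `u` grow without bound. On `[0, T_max)` both `u` and
`0 ≤ u' ≤ M⁴ T_max` stay bounded, so Picard–Lindelöf continues the solution past `T_max`,
contradicting maximality.
-/

open Set Filter Topology Metric Real

section Calculus

variable {D : Set ℝ} {f f' : ℝ → ℝ}

theorem monotoneOn_of_forall_hasDerivAt_nonneg (hD : Convex ℝ D)
    (hf : ∀ x ∈ D, HasDerivAt f (f' x) x) (hf' : ∀ x ∈ interior D, 0 ≤ f' x) :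
    MonotoneOn f D :=
  monotoneOn_of_hasDerivWithinAt_nonneg hD (fun x hx ↦ (hf x hx).continuousAt.continuousWithinAt)
    (fun x hx ↦ (hf x (interior_subset hx)).hasDerivWithinAt) hf'

theorem strictMonoOn_of_forall_hasDerivAt_pos (hD : Convex ℝ D)
    (hf : ∀ x ∈ D, HasDerivAt f (f' x) x) (hf' : ∀ x ∈ interior D, 0 < f' x) :
    StrictMonoOn f D :=
  strictMonoOn_of_hasDerivWithinAt_pos hD (fun x hx ↦ (hf x hx).continuousAt.continuousWithinAt)
    (fun x hx ↦ (hf x (interior_subset hx)).hasDerivWithinAt) hf'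

theorem exists_first_le_of_continuousOn {g : ℝ → ℝ} {a t c : ℝ} (hat : a ≤ t)
    (hg : ContinuousOn g (Icc a t)) (ha : c < g a) (ht : g t ≤ c) :
    ∃ τ ∈ Ioc a t, g τ ≤ c ∧ ∀ s ∈ Ico a τ, c < g s := by
  set S := Icc a t ∩ g ⁻¹' Iic c
  have hbdd : BddBelow S := ⟨a, fun s hs ↦ hs.1.1⟩
  have hmem : sInf S ∈ S :=
    (hg.preimage_isClosed_of_isClosed isClosed_Icc isClosed_Iic).csInf_mem
      ⟨t, ⟨hat, le_rfl⟩, ht⟩ hbdd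
  refine ⟨sInf S, ⟨hmem.1.1.lt_of_ne ?_, hmem.1.2⟩, hmem.2, fun s hs ↦ ?_⟩
  · rintro heq
    exact (heq ▸ hmem.2 : g a ≤ c).not_gt ha
  · by_contra! hle
    exact (csInf_le hbdd ⟨⟨hs.1, hs.2.le.trans hmem.1.2⟩, hle⟩).not_gt hs.2

end Calculus

section Extension

variable {E : Type*} [NormedAddCommGroup E] [NormedSpace ℝ E] [CompleteSpace E]

/-- The Picard–Lindelöf existence time is uniform on a bounded set, so a local solution started
close enough to `T` reaches beyond it, and by uniqueness it agrees with `x`. -/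
theorem exists_hasDerivAt_extension_of_bounded {f : E → E}
    (hf : ∀ ρ, ∃ K, LipschitzOnWith K f (closedBall 0 ρ)) {x : ℝ → E} {t₁ T R : ℝ}
    (hT : t₁ < T) (hx : ∀ t ∈ Ioo t₁ T, HasDerivAt x (f (x t)) t)
    (hR : ∀ t ∈ Ioo t₁ T, ‖x t‖ ≤ R) :
    ∃ s < T, ∃ T' > T, ∃ y : ℝ → E,
      (∀ t ∈ Ioo s T', HasDerivAt y (f (y t)) t) ∧ EqOn y x (Ioo s T) := by
  have hR0 : 0 ≤ R :=
    (norm_nonneg _).trans (hR _ ⟨left_lt_add_div_two.2 hT, add_div_two_lt_right.2 hT⟩)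
  obtain ⟨K, hK⟩ := hf (R + 1)
  set L : NNReal := ‖f 0‖₊ + K * (R + 1).toNNReal
  set ε : ℝ := 1 / (L + 1)
  have hε : 0 < ε := by positivity
  have hLε : L * ε ≤ 1 := by
    rw [mul_one_div, div_le_one (by positivity)]; linarith
  set t₀ := max ((t₁ + T) / 2) (T - ε / 2)
  have ht₀T : t₀ < T := max_lt (add_div_two_lt_right.2 hT) (by linarith)
  have ht₁t₀ : t₁ < t₀ := (left_lt_add_div_two.2 hT).trans_le (le_max_left _ _)
  have hTt₀ : T < t₀ + ε := by linarith [le_max_right ((t₁ + T) / 2) (T - ε / 2)]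
  have hball : closedBall (x t₀) 1 ⊆ closedBall 0 (R + 1) := by
    refine closedBall_subset_closedBall' ?_
    rw [dist_zero_right]; linarith [hR t₀ ⟨ht₁t₀, ht₀T⟩]
  have hbound : ∀ z ∈ closedBall (x t₀) ((1 : NNReal) : ℝ), ‖f z‖ ≤ L := by
    intro z hz
    have hz' := hball (by simpa using hz)
    calc ‖f z‖ ≤ ‖f 0‖ + ‖f z - f 0‖ := norm_le_insert' _ _
      _ ≤ ‖f 0‖ + K * ‖z - 0‖ := by
          gcongr; exact hK.norm_sub_le hz' (mem_closedBall_self (by linarith))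
      _ ≤ L := by
          simp only [sub_zero, L, NNReal.coe_add, coe_nnnorm, NNReal.coe_mul,
            Real.coe_toNNReal', add_le_add_iff_left]
          gcongr
          exact (mem_closedBall_zero_iff.1 hz').trans (le_max_left _ _)
  have hpl : IsPicardLindelof (fun _ ↦ f) (tmin := t₀ - ε) (tmax := t₀ + ε)
      ⟨t₀, by constructor <;> linarith⟩ (x t₀) 1 0 L K :=
    .of_time_independent hbound (hK.mono (by simpa using hball)) (by simpa using hLε)
  obtain ⟨α, hα₀, hα⟩ := hpl.exists_eq_forall_mem_Icc_hasDerivWithinAt₀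
  have hα' : ∀ t ∈ Ioo (t₀ - ε) (t₀ + ε), HasDerivAt α (f (α t)) t := fun t ht ↦
    (hα t (Ioo_subset_Icc_self ht)).hasDerivAt (Icc_mem_nhds ht.1 ht.2)
  obtain ⟨R', hR'⟩ := isCompact_Icc.exists_bound_of_continuousOn
    fun t ht ↦ (hα t ht).continuousWithinAt
  obtain ⟨K', hK'⟩ := hf (max R R')
  set s := max t₁ (t₀ - ε)
  have hsub : Ioo s T ⊆ Ioo (t₀ - ε) (t₀ + ε) := fun t ht ↦
    ⟨(le_max_right _ _).trans_lt ht.1, ht.2.trans hTt₀⟩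
  refine ⟨s, max_lt (ht₁t₀.trans ht₀T) (by linarith), t₀ + ε, hTt₀, α,
    fun t ht ↦ hα' t ⟨(le_max_right _ _).trans_lt ht.1, ht.2⟩, ?_⟩
  refine ODE_solution_unique_of_mem_Ioo (v := fun _ ↦ f) (s := fun _ ↦ closedBall 0 (max R R'))
    (fun _ _ ↦ hK') ⟨max_lt ht₁t₀ (by linarith), ht₀T⟩ (fun t ht ↦ ⟨hα' t (hsub ht), ?_⟩)
    (fun t ht ↦ ⟨hx t ⟨(le_max_left _ _).trans_lt ht.1, ht.2⟩, ?_⟩) hα₀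
  · exact mem_closedBall_zero_iff.2
      ((hR' t (Ioo_subset_Icc_self (hsub ht))).trans (le_max_right _ _))
  · exact mem_closedBall_zero_iff.2
      ((hR t ⟨(le_max_left _ _).trans_lt ht.1, ht.2⟩).trans (le_max_left _ _))

end Extension

namespace QuarticODE

def IsSolutionAt (a b : ℝ) (u : ℝ → ℝ) (τ : ℝ) : Prop :=
  DifferentiableAt ℝ u τ ∧ DifferentiableAt ℝ (deriv u) τ ∧
    deriv (deriv u) τ + a * deriv u τ + b * u τ = u τ ^ 4

def phaseField (a b : ℝ) (p : ℝ × ℝ) : ℝ × ℝ :=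
  (p.2, p.1 ^ 4 - b * p.1 - a * p.2)

variable {a b c : ℝ} {u v : ℝ → ℝ} {τ t : ℝ}

theorem contDiff_phaseField : ContDiff ℝ 1 (phaseField a b) := by
  unfold phaseField; fun_prop

theorem IsSolutionAt.congr_of_eventuallyEq (h : IsSolutionAt a b u τ) (hvu : v =ᶠ[𝓝 τ] u) :
    IsSolutionAt a b v τ := by
  obtain ⟨h₁, h₂, h₃⟩ := h
  have hd : deriv v =ᶠ[𝓝 τ] deriv u := hvu.deriv
  refine ⟨hvu.differentiableAt_iff.2 h₁, hd.differentiableAt_iff.2 h₂, ?_⟩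
  rwa [hd.deriv_eq, hd.eq_of_nhds, hvu.eq_of_nhds]

theorem IsSolutionAt.hasDerivAt_phaseField (h : IsSolutionAt a b u τ) :
    HasDerivAt (fun t ↦ (u t, deriv u t)) (phaseField a b (u τ, deriv u τ)) τ := by
  obtain ⟨h₁, h₂, h₃⟩ := h
  convert h₁.hasDerivAt.prodMk h₂.hasDerivAt using 1
  simp only [phaseField, Prod.mk.injEq, true_and]; linarith

theorem isSolutionAt_fst {y : ℝ → ℝ × ℝ} {U : Set ℝ} (hU : IsOpen U)
    (hy : ∀ t ∈ U, HasDerivAt y (phaseField a b (y t)) t) (hτ : τ ∈ U) :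
    IsSolutionAt a b (fun t ↦ (y t).1) τ := by
  have hfst : ∀ t ∈ U, HasDerivAt (fun t ↦ (y t).1) (y t).2 t := fun t ht ↦
    hasFDerivAt_fst.comp_hasDerivAt (f := y) t (hy t ht)
  have hsnd : HasDerivAt (fun t ↦ (y t).2) ((y τ).1 ^ 4 - b * (y τ).1 - a * (y τ).2) τ :=
    hasFDerivAt_snd.comp_hasDerivAt (f := y) τ (hy τ hτ)
  have hd : deriv (fun t ↦ (y t).1) =ᶠ[𝓝 τ] fun t ↦ (y t).2 :=
    eventually_of_mem (hU.mem_nhds hτ) fun t ht ↦ (hfst t ht).deriv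
  refine ⟨(hfst τ hτ).differentiableAt, hd.differentiableAt_iff.2 hsnd.differentiableAt, ?_⟩
  rw [hd.deriv_eq, hd.eq_of_nhds, hsnd.deriv]; ring

theorem exists_extension_of_bounded {T R : ℝ} (hT : 0 < T)
    (hsol : ∀ τ ∈ Ico 0 T, IsSolutionAt a b u τ)
    (hR : ∀ τ ∈ Ico 0 T, |u τ| ≤ R ∧ |deriv u τ| ≤ R) :
    ∃ T' > T, ∃ w : ℝ → ℝ, EqOn w u (Ico 0 T) ∧ ∀ τ ∈ Ico 0 T', IsSolutionAt a b w τ := by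
  have hLip (ρ : ℝ) : ∃ K, LipschitzOnWith K (phaseField a b) (closedBall 0 ρ) :=
    contDiff_phaseField.contDiffOn.exists_lipschitzOnWith one_ne_zero (convex_closedBall _ _)
      (isCompact_closedBall _ _)
  obtain ⟨s, hsT, T', hT', y, hy, hyu⟩ := exists_hasDerivAt_extension_of_bounded hLip hT
    (fun t ht ↦ (hsol t (Ioo_subset_Ico_self ht)).hasDerivAt_phaseField)
    (fun t ht ↦ by
      obtain ⟨h₁, h₂⟩ := hR t (Ioo_subset_Ico_self ht)
      simpa only [Prod.norm_def, Real.norm_eq_abs] using max_le h₁ h₂)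
  refine ⟨T', hT', fun t ↦ if t < T then u t else (y t).1, fun t ht ↦ if_pos ht.2,
    fun τ hτ ↦ ?_⟩
  rcases lt_or_ge τ T with hτT | hTτ
  · exact (hsol τ ⟨hτ.1, hτT⟩).congr_of_eventuallyEq
      (eventually_of_mem (Iio_mem_nhds hτT) fun t ht ↦ if_pos ht)
  · refine (isSolutionAt_fst isOpen_Ioo hy ⟨hsT.trans_le hTτ, hτ.2⟩).congr_of_eventuallyEq
      (eventually_of_mem (Ioo_mem_nhds (hsT.trans_le hTτ) hτ.2) fun t ht ↦ ?_)
    dsimp only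
    split_ifs with htT
    · exact (congrArg Prod.fst (hyu ⟨ht.1, htT⟩)).symm
    · rfl

theorem forcing_pos (hc : 0 ≤ c) (hcb : b ≤ c ^ 3) {x : ℝ} (hx : c < x) :
    0 < x ^ 4 - b * x := by
  have hx₀ : 0 < x := hc.trans_lt hx
  have : c ^ 3 < x ^ 3 := pow_lt_pow_left₀ hx hc three_ne_zero
  nlinarith

theorem forcing_mono (hc : 0 ≤ c) (hcb : b ≤ c ^ 3) {x y : ℝ} (hx : c < x) (hxy : x ≤ y) :
    x ^ 4 - b * x ≤ y ^ 4 - b * y := by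
  have hx₀ : 0 < x := hc.trans_lt hx
  have hy₀ : 0 < y := hx₀.trans_le hxy
  have hcx : c ^ 3 < x ^ 3 := pow_lt_pow_left₀ hx hc three_ne_zero
  have hfactor : 0 ≤ y ^ 3 + y ^ 2 * x + y * x ^ 2 + (x ^ 3 - b) := by
    have : 0 ≤ y ^ 3 + y ^ 2 * x + y * x ^ 2 := by positivity
    linarith
  have key : y ^ 4 - b * y - (x ^ 4 - b * x)
      = (y - x) * (y ^ 3 + y ^ 2 * x + y * x ^ 2 + (x ^ 3 - b)) := by ring
  linarith [mul_nonneg (sub_nonneg.2 hxy) hfactor]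

theorem IsSolutionAt.hasDerivAt_exp_mul_deriv (h : IsSolutionAt a b u τ) :
    HasDerivAt (fun t ↦ exp (a * t) * deriv u t) (exp (a * τ) * (u τ ^ 4 - b * u τ)) τ := by
  obtain ⟨-, h₂, h₃⟩ := h
  have hexp : HasDerivAt (fun t ↦ exp (a * t)) (exp (a * τ) * a) τ := by
    simpa using ((hasDerivAt_id τ).const_mul a).exp
  exact (hexp.mul h₂.hasDerivAt).congr_deriv (by rw [← h₃]; ring)

theorem deriv_pos_of_forcing_pos (ht : 0 < t) (hsol : ∀ s ∈ Icc 0 t, IsSolutionAt a b u s)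
    (h₀ : deriv u 0 = 0) (hF : ∀ s ∈ Ioo 0 t, 0 < u s ^ 4 - b * u s) : 0 < deriv u t := by
  have hmono : StrictMonoOn (fun t ↦ exp (a * t) * deriv u t) (Icc 0 t) :=
    strictMonoOn_of_forall_hasDerivAt_pos (convex_Icc 0 t)
      (fun s hs ↦ (hsol s hs).hasDerivAt_exp_mul_deriv)
      (by simpa only [interior_Icc] using fun s hs ↦ mul_pos (exp_pos _) (hF s hs))
  have := hmono (left_mem_Icc.2 ht.le) (right_mem_Icc.2 ht.le) ht
  simp only [h₀, mul_zero] at this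
  exact pos_of_mul_pos_right this (exp_pos _).le

theorem lt_of_isSolutionAt (hc : 0 ≤ c) (hcb : b ≤ c ^ 3) (ht : 0 ≤ t)
    (hsol : ∀ s ∈ Icc 0 t, IsSolutionAt a b u s) (h₀ : deriv u 0 = 0) (hcu : c < u 0) :
    c < u t := by
  by_contra! hle
  obtain ⟨τ, hτ, huτ, hbefore⟩ := exists_first_le_of_continuousOn ht
    (fun s hs ↦ (hsol s hs).1.continuousAt.continuousWithinAt) hcu hle
  have hτt : Icc 0 τ ⊆ Icc 0 t := Icc_subset_Icc_right hτ.2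
  have hderiv : ∀ s ∈ Ioc 0 τ, 0 < deriv u s := fun s hs ↦
    deriv_pos_of_forcing_pos hs.1 (fun r hr ↦ hsol r (hτt (Icc_subset_Icc_right hs.2 hr))) h₀
      fun r hr ↦ forcing_pos hc hcb (hbefore r ⟨hr.1.le, hr.2.trans_le hs.2⟩)
  have hmono : StrictMonoOn u (Icc 0 τ) :=
    strictMonoOn_of_forall_hasDerivAt_pos (convex_Icc 0 τ)
      (fun s hs ↦ (hsol s (hτt hs)).1.hasDerivAt)
      (by simpa only [interior_Icc] using fun s hs ↦ hderiv s ⟨hs.1, hs.2.le⟩)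
  linarith [hmono (left_mem_Icc.2 hτ.1.le) (right_mem_Icc.2 hτ.1.le) hτ.1]

theorem deriv_nonneg_of_isSolutionAt (hc : 0 ≤ c) (hcb : b ≤ c ^ 3) (ht : 0 ≤ t)
    (hsol : ∀ s ∈ Icc 0 t, IsSolutionAt a b u s) (h₀ : deriv u 0 = 0) (hcu : c < u 0) :
    0 ≤ deriv u t := by
  rcases ht.eq_or_lt with rfl | ht
  · exact h₀.ge
  refine (deriv_pos_of_forcing_pos ht hsol h₀ fun s hs ↦ forcing_pos hc hcb ?_).le
  exact lt_of_isSolutionAt hc hcb hs.1.le (fun r hr ↦ hsol r (Icc_subset_Icc_right hs.2.le hr))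
    h₀ hcu

theorem exists_gt_of_isSolutionAt_Ici (ha : 0 ≤ a) (hc : 0 ≤ c) (hcb : b ≤ c ^ 3)
    (hsol : ∀ τ ∈ Ici 0, IsSolutionAt a b u τ) (h₀ : deriv u 0 = 0) (hcu : c < u 0) (M : ℝ) :
    ∃ τ ∈ Ici 0, M < u τ := by
  by_contra! hM
  have hM₀ : u 0 ≤ M := hM 0 self_mem_Ici
  have hsolIcc (t : ℝ) : ∀ s ∈ Icc 0 t, IsSolutionAt a b u s := fun s hs ↦ hsol s hs.1
  have hmono : MonotoneOn u (Ici 0) :=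
    monotoneOn_of_forall_hasDerivAt_nonneg (convex_Ici 0) (fun t ht ↦ (hsol t ht).1.hasDerivAt)
      fun t ht ↦ deriv_nonneg_of_isSolutionAt hc hcb (interior_subset ht) (hsolIcc t) h₀ hcu
  set δ := u 0 ^ 4 - b * u 0
  have hδ : 0 < δ := forcing_pos hc hcb hcu
  have hG : MonotoneOn (fun t ↦ deriv u t + a * u t - δ * t) (Ici 0) := by
    refine monotoneOn_of_forall_hasDerivAt_nonneg (convex_Ici 0) (fun t ht ↦
      (((hsol t ht).2.1.hasDerivAt.add ((hsol t ht).1.hasDerivAt.const_mul a)).sub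
        ((hasDerivAt_id t).const_mul δ))) fun t ht ↦ ?_
    have ht₀ : (0 : ℝ) ≤ t := interior_subset ht
    have := forcing_mono hc hcb hcu (hmono self_mem_Ici ht₀ ht₀)
    linarith [(hsol t ht₀).2.2]
  set t₁ := (a * (M - u 0) + 1) / δ
  have ht₁ : 0 ≤ t₁ := div_nonneg (by nlinarith) hδ.le
  have hderiv : ∀ t ∈ Ici t₁, 1 ≤ deriv u t := fun t ht ↦ by
    have ht₀ : (0 : ℝ) ≤ t := ht₁.trans ht
    have hG0 := hG self_mem_Ici ht₀ ht₀
    have hδt : a * (M - u 0) + 1 ≤ δ * t := by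
      rw [mul_comm δ]; exact (div_le_iff₀ hδ).1 ht
    simp only [h₀, mul_zero, sub_zero, zero_add] at hG0
    nlinarith [hM t ht₀]
  have hgrowth := (convex_Ici t₁).mul_sub_le_image_sub_of_le_deriv
    (fun t ht ↦ (hsol t (ht₁.trans ht)).1.continuousAt.continuousWithinAt)
    (fun t ht ↦ (hsol t (ht₁.trans (interior_subset ht))).1.differentiableWithinAt)
    (fun t ht ↦ hderiv t (interior_subset ht)) t₁ self_mem_Ici (t₁ + (M - u 0 + 1))
    (by simp only [mem_Ici]; linarith) (by linarith)
  linarith [hM (t₁ + (M - u 0 + 1)) (by simp only [mem_Ici]; linarith),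
    hmono self_mem_Ici ht₁ ht₁]

theorem exists_extension_of_isSolutionAt_Ico (ha : 0 ≤ a) (hb : 0 ≤ b) (hc : 0 ≤ c)
    (hcb : b ≤ c ^ 3) {T M : ℝ} (hT : 0 < T) (hsol : ∀ τ ∈ Ico 0 T, IsSolutionAt a b u τ)
    (h₀ : deriv u 0 = 0) (hcu : c < u 0) (hM : ∀ τ ∈ Ico 0 T, u τ ≤ M) :
    ∃ T' > T, ∃ w : ℝ → ℝ, EqOn w u (Ico 0 T) ∧ ∀ τ ∈ Ico 0 T', IsSolutionAt a b w τ := by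
  have hsolIcc {t : ℝ} (ht : t ∈ Ico 0 T) : ∀ s ∈ Icc 0 t, IsSolutionAt a b u s :=
    fun s hs ↦ hsol s (Icc_subset_Ico_right ht.2 hs)
  have hu {t : ℝ} (ht : t ∈ Ico 0 T) : c < u t :=
    lt_of_isSolutionAt hc hcb ht.1 (hsolIcc ht) h₀ hcu
  have hu' {t : ℝ} (ht : t ∈ Ico 0 T) : 0 ≤ deriv u t :=
    deriv_nonneg_of_isSolutionAt hc hcb ht.1 (hsolIcc ht) h₀ hcu
  have hu'' : ∀ t ∈ Ico 0 T, deriv (deriv u) t ≤ M ^ 4 := fun t ht ↦ by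
    have h4 : u t ^ 4 ≤ M ^ 4 := pow_le_pow_left₀ (hc.trans (hu ht).le) (hM t ht) 4
    nlinarith [(hsol t ht).2.2, hu ht, hu' ht]
  refine exists_extension_of_bounded hT hsol (R := max M (M ^ 4 * T)) fun t ht ↦ ⟨?_, ?_⟩
  · rw [abs_of_nonneg (hc.trans (hu ht).le)]
    exact (hM t ht).trans (le_max_left _ _)
  · have hbound := (convex_Ico 0 T).image_sub_le_mul_sub_of_deriv_le
      (fun s hs ↦ (hsol s hs).2.1.continuousAt.continuousWithinAt)
      (fun s hs ↦ (hsol s (interior_subset hs)).2.1.differentiableWithinAt)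
      (fun s hs ↦ hu'' s (interior_subset hs)) 0 ⟨le_rfl, hT⟩ t ht ht.1
    rw [h₀, sub_zero, sub_zero] at hbound
    rw [abs_of_nonneg (hu' ht)]
    exact le_max_of_le_right (hbound.trans (mul_le_mul_of_nonneg_left ht.2.le (by positivity)))

end QuarticODE

/-- For `k > 1` and `u₀ > (k(k-1))^{1/3}`, the maximal forward solution of
`u'' + (2k-1)u' + k(k-1)u = u⁴` with `u(0) = u₀`, `u'(0) = 0`, defined on its maximal
interval of existence `J = [0, T_max)` (with `T_max ≤ ∞`), is unbounded:
`sup_{τ ∈ J} u(τ) = +∞`. Maximality is expressed as non-extendability: any solution on a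
forward interval `J' ⊇ J` agreeing with `u` on `J` has `J' ⊆ J`. -/
theorem statement13 (k u₀ : ℝ) (hk : 1 < k) (hu₀ : (k * (k - 1)) ^ ((1 : ℝ) / 3) < u₀)
    (u : ℝ → ℝ) (J : Set ℝ)
    (hJ : J = Set.Ici (0 : ℝ) ∨ ∃ Tmax : ℝ, 0 < Tmax ∧ J = Set.Ico 0 Tmax)
    (hd1 : ∀ τ ∈ J, DifferentiableAt ℝ u τ)
    (hd2 : ∀ τ ∈ J, DifferentiableAt ℝ (deriv u) τ)
    (heq : ∀ τ ∈ J,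
      deriv (deriv u) τ + (2 * k - 1) * deriv u τ + k * (k - 1) * u τ = u τ ^ 4)
    (hinit : u 0 = u₀) (hinit' : deriv u 0 = 0)
    (hmax : ∀ (v : ℝ → ℝ) (J' : Set ℝ),
      (J' = Set.Ici (0 : ℝ) ∨ ∃ T' : ℝ, 0 < T' ∧ J' = Set.Ico 0 T') →
      J ⊆ J' → Set.EqOn v u J →
      (∀ τ ∈ J', DifferentiableAt ℝ v τ) →
      (∀ τ ∈ J', DifferentiableAt ℝ (deriv v) τ) →
      (∀ τ ∈ J',
        deriv (deriv v) τ + (2 * k - 1) * deriv v τ + k * (k - 1) * v τ = v τ ^ 4) →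
      J' ⊆ J) :
    ∀ M : ℝ, ∃ τ ∈ J, M < u τ := by
  intro M
  have ha : 0 ≤ 2 * k - 1 := by linarith
  have hb : 0 < k * (k - 1) := mul_pos (by linarith) (by linarith)
  set c := (k * (k - 1)) ^ ((1 : ℝ) / 3)
  have hc : 0 ≤ c := by positivity
  have hcb : k * (k - 1) ≤ c ^ 3 := by
    rw [← Real.rpow_natCast, ← Real.rpow_mul hb.le]; norm_num
  have hsol : ∀ τ ∈ J, QuarticODE.IsSolutionAt (2 * k - 1) (k * (k - 1)) u τ :=
    fun τ hτ ↦ ⟨hd1 τ hτ, hd2 τ hτ, heq τ hτ⟩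
  have hcu : c < u 0 := hinit ▸ hu₀
  rcases hJ with rfl | ⟨T, hT, rfl⟩
  · exact QuarticODE.exists_gt_of_isSolutionAt_Ici ha hc hcb hsol hinit' hcu M
  by_contra! hM
  obtain ⟨T', hT', w, hwu, hw⟩ :=
    QuarticODE.exists_extension_of_isSolutionAt_Ico ha hb.le hc hcb hT hsol hinit' hcu hM
  have hT'T := hmax w (Ico 0 T') (Or.inr ⟨T', hT.trans hT', rfl⟩) (Ico_subset_Ico_right hT'.le)
    hwu (fun τ hτ ↦ (hw τ hτ).1) (fun τ hτ ↦ (hw τ hτ).2.1) (fun τ hτ ↦ (hw τ hτ).2.2)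
  exact (hT'T ⟨hT.le, hT'⟩).2.false
end

section
/- (First-quadrant orbits for k = 1.) Let u be a maximal forward solution of u''(τ) + u'(τ) = u(τ)^4 with u(0) > 0 and u'(0) > 0, defined on [0, T_max). Then u(τ) > 0 and u'(τ) > 0 for all τ ∈ [0, T_max) (the orbit never intersects the u- or v-axes), and both u and u' are unbounded: sup over [0, T_max) of u(τ) = +∞ and sup over [0, T_max) of u'(τ) = +∞. -/
/-!
Since `(eᵗ u')' = eᵗ u⁴ ≥ 0`, the quantity `eᵗ u'` never decreases, so `u'` stays positive and
`u` increases. If `u ≤ L`, then `(eᵗ (u' - L⁴))' = eᵗ (u⁴ - L⁴) ≤ 0` bounds `u'`, while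
`(u + u')' = u⁴ ≥ u(0)⁴ > 0`. On `[0, ∞)` this forces `u + u'` to grow linearly, which is
absurd. On `[0, T)` the monotone bounded functions `u` and `u + u'` have limits at `T`, and the
local existence theorem for the first-order system `(u, v)' = (v, u⁴ - v)` started from these
limits extends the solution beyond `T`, contradicting maximality. Finally `u' ≤ M` keeps `u`
bounded on `[0, T)`, while on `[0, ∞)` it is incompatible with `u'' = u⁴ - u'` once `u⁴ > 2M`.
-/

open Set Filter Topology Real

theorem Convex.mul_sub_le_sub_of_hasDerivAt {D : Set ℝ} (hD : Convex ℝ D) {f f' : ℝ → ℝ}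
    {C : ℝ} (hf : ∀ t ∈ D, HasDerivAt f (f' t) t) (hC : ∀ t ∈ D, C ≤ f' t)
    {x y : ℝ} (hx : x ∈ D) (hy : y ∈ D) (hxy : x ≤ y) : C * (y - x) ≤ f y - f x :=
  hD.mul_sub_le_image_sub_of_le_deriv (fun t ht => (hf t ht).continuousAt.continuousWithinAt)
    (fun t ht => (hf t (interior_subset ht)).differentiableAt.differentiableWithinAt)
    (fun t ht => (hf t (interior_subset ht)).deriv ▸ hC t (interior_subset ht)) x hx y hy hxy

theorem Convex.sub_le_mul_sub_of_hasDerivAt {D : Set ℝ} (hD : Convex ℝ D) {f f' : ℝ → ℝ}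
    {C : ℝ} (hf : ∀ t ∈ D, HasDerivAt f (f' t) t) (hC : ∀ t ∈ D, f' t ≤ C)
    {x y : ℝ} (hx : x ∈ D) (hy : y ∈ D) (hxy : x ≤ y) : f y - f x ≤ C * (y - x) := by
  have := hD.mul_sub_le_sub_of_hasDerivAt (fun t ht => (hf t ht).neg)
    (fun t ht => neg_le_neg (hC t ht)) hx hy hxy
  simp only [Pi.neg_apply] at this
  linarith

theorem MonotoneOn.exists_tendsto_nhdsLT {f : ℝ → ℝ} {S T B : ℝ} (hST : S < T)
    (hf : MonotoneOn f (Ico S T)) (hB : ∀ t ∈ Ico S T, f t ≤ B) :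
    ∃ p, Tendsto f (𝓝[<] T) (𝓝 p) :=
  ⟨_, (hf.mono Ioo_subset_Ico_self).tendsto_nhdsWithin_Ioo_left (nonempty_Ioo.2 hST)
    ⟨B, forall_mem_image.2 fun t ht => hB t (Ioo_subset_Ico_self ht)⟩⟩

theorem hasDerivAt_piecewise_Iio {a b a' b' : ℝ → ℝ} {S T T' : ℝ} (hST : S < T)
    (ha : ∀ t ∈ Ico S T, HasDerivAt a (a' t) t) (hb : ∀ t ∈ Ico T T', HasDerivAt b (b' t) t)
    (ha_lim : Tendsto a (𝓝[<] T) (𝓝 (b T))) (ha'_lim : Tendsto a' (𝓝[<] T) (𝓝 (b' T))) :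
    ∀ t ∈ Ico S T', HasDerivAt ((Iio T).piecewise a b) ((Iio T).piecewise a' b' t) t := by
  have h_lt : ∀ t < T, (Iio T).piecewise a b =ᶠ[𝓝 t] a := fun t ht =>
    (piecewise_eqOn _ _ _).eventuallyEq_of_mem (Iio_mem_nhds ht)
  have h_ge : EqOn ((Iio T).piecewise a b) b (Ici T) := fun t ht =>
    piecewise_eq_of_notMem _ _ _ (notMem_Iio.2 ht)
  intro t ht
  rcases lt_trichotomy t T with htT | rfl | hTt
  · rw [piecewise_eq_of_mem (Iio T) _ _ htT]
    exact (ha t ⟨ht.1, htT⟩).congr_of_eventuallyEq (h_lt t htT)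
  · rw [piecewise_eq_of_notMem (Iio t) _ _ (lt_irrefl t)]
    have hIoo : Ioo S t ∈ 𝓝[<] t := Ioo_mem_nhdsLT hST
    have hleft : HasDerivWithinAt ((Iio t).piecewise a b) (b' t) (Iic t) t := by
      refine hasDerivWithinAt_Iic_of_tendsto_deriv (s := Ioo S t) (fun s hs => ?_) ?_ hIoo ?_
      · exact ((ha s (Ioo_subset_Ico_self hs)).differentiableAt.congr_of_eventuallyEq
          (h_lt s hs.2)).differentiableWithinAt
      · rw [ContinuousWithinAt, h_ge self_mem_Ici, nhdsWithin_Ioo_eq_nhdsLT hST]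
        exact ha_lim.congr' (eventually_nhdsWithin_of_forall fun s hs =>
          (piecewise_eq_of_mem _ _ _ hs).symm)
      · refine ha'_lim.congr' ?_
        filter_upwards [hIoo] with s hs
        exact ((ha s (Ioo_subset_Ico_self hs)).congr_of_eventuallyEq (h_lt s hs.2)).deriv.symm
    have hright : HasDerivWithinAt ((Iio t).piecewise a b) (b' t) (Ici t) t :=
      (hb t ⟨le_rfl, ht.2⟩).hasDerivWithinAt.congr h_ge (h_ge self_mem_Ici)
    simpa using hleft.union hright
  · rw [piecewise_eq_of_notMem _ _ _ (notMem_Iio.2 hTt.le)]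
    exact (hb t ⟨hTt.le, ht.2⟩).congr_of_eventuallyEq
      (h_ge.eventuallyEq_of_mem (Ici_mem_nhds hTt))

structure SolvesOn (g : ℝ × ℝ → ℝ) (u : ℝ → ℝ) (J : Set ℝ) : Prop where
  differentiableAt : ∀ t ∈ J, DifferentiableAt ℝ u t
  differentiableAt_deriv : ∀ t ∈ J, DifferentiableAt ℝ (deriv u) t
  deriv_deriv : ∀ t ∈ J, deriv (deriv u) t = g (u t, deriv u t)

namespace SolvesOn

variable {g : ℝ × ℝ → ℝ} {u : ℝ → ℝ} {J : Set ℝ}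

theorem hasDerivAt (h : SolvesOn g u J) {t : ℝ} (ht : t ∈ J) : HasDerivAt u (deriv u t) t :=
  (h.differentiableAt t ht).hasDerivAt

theorem hasDerivAt_deriv (h : SolvesOn g u J) {t : ℝ} (ht : t ∈ J) :
    HasDerivAt (deriv u) (g (u t, deriv u t)) t :=
  h.deriv_deriv t ht ▸ (h.differentiableAt_deriv t ht).hasDerivAt

theorem monotoneOn (h : SolvesOn g u J) (hJ : Convex ℝ J) (hu' : ∀ t ∈ J, 0 ≤ deriv u t) :
    MonotoneOn u J := fun s hs t ht hst => by
  simpa using hJ.mul_sub_le_sub_of_hasDerivAt (fun _ hτ => h.hasDerivAt hτ) hu' hs ht hst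

theorem exists_deriv_lt_of_Ico {T : ℝ} (h : SolvesOn g u (Ico 0 T))
    (hu : ∀ M, ∃ t ∈ Ico 0 T, M < u t) (M : ℝ) : ∃ t ∈ Ico 0 T, M < deriv u t := by
  by_contra! hM
  obtain ⟨t, ht, hMt⟩ := hu (u 0 + |M| * T)
  have key := (convex_Ico 0 T).sub_le_mul_sub_of_hasDerivAt (fun _ hτ => h.hasDerivAt hτ) hM
    ⟨le_rfl, ht.1.trans_lt ht.2⟩ ht ht.1
  have hMT : M * (t - 0) ≤ |M| * T := by
    rw [sub_zero]
    exact mul_le_mul (le_abs_self M) ht.2.le ht.1 (abs_nonneg M)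
  linarith

theorem exists_extension (hg : ContDiff ℝ 1 g) {S T p q : ℝ} (hST : S < T)
    (h : SolvesOn g u (Ico S T)) (hp : Tendsto u (𝓝[<] T) (𝓝 p))
    (hq : Tendsto (deriv u) (𝓝[<] T) (𝓝 q)) :
    ∃ T' > T, ∃ v, EqOn v u (Ico S T) ∧ SolvesOn g v (Ico S T') := by
  obtain ⟨f, hf0, ε, hε, hf⟩ := ((contDiff_snd.prodMk hg).contDiffAt (x := (p, q))
    ).exists_forall_mem_closedBall_exists_eq_forall_mem_Ioo_hasDerivAt₀ T
  have hmem : ∀ t ∈ Ico T (T + ε), t ∈ Ioo (T - ε) (T + ε) := fun t ht =>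
    ⟨by linarith [ht.1], ht.2⟩
  have hf₁ : ∀ t ∈ Ico T (T + ε), HasDerivAt (fun s => (f s).1) (f t).2 t := fun t ht =>
    by exact hasFDerivAt_fst.comp_hasDerivAt t (hf t (hmem t ht))
  have hf₂ : ∀ t ∈ Ico T (T + ε), HasDerivAt (fun s => (f s).2) (g (f t)) t := fun t ht =>
    by exact hasFDerivAt_snd.comp_hasDerivAt t (hf t (hmem t ht))
  set v := (Iio T).piecewise u (fun s => (f s).1)
  set w := (Iio T).piecewise (deriv u) (fun s => (f s).2)
  have hv : ∀ t ∈ Ico S (T + ε), HasDerivAt v (w t) t :=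
    hasDerivAt_piecewise_Iio hST (fun t ht => h.hasDerivAt ht) hf₁ (by rwa [hf0]) (by rwa [hf0])
  have hw : ∀ t ∈ Ico S (T + ε), HasDerivAt w (g (v t, w t)) t := by
    intro t ht
    convert hasDerivAt_piecewise_Iio hST (fun t ht => h.hasDerivAt_deriv ht) hf₂
      (by rwa [hf0]) (by rw [hf0]; exact (hg.continuous.tendsto _).comp (hp.prodMk_nhds hq))
      t ht using 1
    by_cases htT : t ∈ Iio T <;> simp [v, w, htT]
  have hvw : EqOn (deriv v) w (Iio (T + ε)) := by
    intro t ht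
    by_cases htT : t < T
    · rw [((piecewise_eqOn _ _ _).eventuallyEq_of_mem (Iio_mem_nhds htT)).deriv_eq]
      exact (piecewise_eq_of_mem (Iio T) _ _ htT).symm
    · exact (hv t ⟨hST.le.trans (not_lt.1 htT), ht⟩).deriv
  have hvw_nhds : ∀ t ∈ Ico S (T + ε), deriv v =ᶠ[𝓝 t] w := fun t ht =>
    hvw.eventuallyEq_of_mem (Iio_mem_nhds ht.2)
  refine ⟨T + ε, by linarith, v, fun t ht => piecewise_eq_of_mem (Iio T) _ _ ht.2,
    fun t ht => (hv t ht).differentiableAt,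
    fun t ht => (hvw_nhds t ht).differentiableAt_iff.2 (hw t ht).differentiableAt,
    fun t ht => ?_⟩
  rw [(hvw_nhds t ht).deriv_eq, (hw t ht).deriv, hvw ht.2]

end SolvesOn

def kineticField (x : ℝ × ℝ) : ℝ := x.1 ^ 4 - x.2

theorem contDiff_kineticField : ContDiff ℝ 1 kineticField :=
  (contDiff_fst.pow 4).sub contDiff_snd

theorem solvesOn_kineticField_iff {u : ℝ → ℝ} {J : Set ℝ} :
    SolvesOn kineticField u J ↔ (∀ t ∈ J, DifferentiableAt ℝ u t) ∧
      (∀ t ∈ J, DifferentiableAt ℝ (deriv u) t) ∧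
      (∀ t ∈ J, deriv (deriv u) t + deriv u t = u t ^ 4) := by
  refine ⟨fun h => ⟨h.1, h.2, fun t ht => ?_⟩, fun ⟨h₁, h₂, h₃⟩ => ⟨h₁, h₂, fun t ht => ?_⟩⟩
  · linarith [h.deriv_deriv t ht, show kineticField (u t, deriv u t) = u t ^ 4 - deriv u t from rfl]
  · linarith [h₃ t ht, show kineticField (u t, deriv u t) = u t ^ 4 - deriv u t from rfl]

namespace SolvesOn

variable {u : ℝ → ℝ} {J : Set ℝ}

theorem hasDerivAt_exp_mul_deriv_sub (h : SolvesOn kineticField u J) (c : ℝ) {t : ℝ}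
    (ht : t ∈ J) :
    HasDerivAt (fun s => exp s * (deriv u s - c)) (exp t * (u t ^ 4 - c)) t := by
  refine ((hasDerivAt_exp t).fun_mul ((h.hasDerivAt_deriv ht).sub_const c)).congr_deriv ?_
  simp only [kineticField]
  ring

theorem hasDerivAt_add_deriv (h : SolvesOn kineticField u J) {t : ℝ} (ht : t ∈ J) :
    HasDerivAt (fun s => u s + deriv u s) (u t ^ 4) t := by
  refine ((h.hasDerivAt ht).fun_add (h.hasDerivAt_deriv ht)).congr_deriv ?_
  simp only [kineticField]
  ring

theorem deriv_pos_of_le (h : SolvesOn kineticField u J) (hJ : Convex ℝ J) {s t : ℝ}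
    (hs : s ∈ J) (ht : t ∈ J) (hst : s ≤ t) (hpos : 0 < deriv u s) : 0 < deriv u t := by
  have key := hJ.mul_sub_le_sub_of_hasDerivAt (fun _ hτ => h.hasDerivAt_exp_mul_deriv_sub 0 hτ)
    (fun τ _ => by rw [sub_zero]; positivity) hs ht hst
  simp only [zero_mul, sub_zero, sub_nonneg] at key
  exact pos_of_mul_pos_right ((mul_pos (exp_pos s) hpos).trans_le key) (exp_pos t).le

theorem deriv_le_max (h : SolvesOn kineticField u J) (hJ : Convex ℝ J) {K : ℝ}
    (hK : ∀ τ ∈ J, u τ ^ 4 ≤ K) {s t : ℝ} (hs : s ∈ J) (ht : t ∈ J) (hst : s ≤ t) :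
    deriv u t ≤ max K (deriv u s) := by
  have key := hJ.sub_le_mul_sub_of_hasDerivAt (fun _ hτ => h.hasDerivAt_exp_mul_deriv_sub K hτ)
    (fun τ hτ => mul_nonpos_of_nonneg_of_nonpos (exp_pos τ).le (sub_nonpos.2 (hK τ hτ)))
    hs ht hst
  set m := max K (deriv u s)
  have hm : 0 ≤ m - K := sub_nonneg.2 (le_max_left _ _)
  have : exp t * (deriv u t - K) ≤ exp t * (m - K) := calc
    _ ≤ exp s * (deriv u s - K) := by linarith
    _ ≤ exp s * (m - K) := by gcongr; exact le_max_right _ _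
    _ ≤ exp t * (m - K) := by gcongr
  linarith [le_of_mul_le_mul_left this (exp_pos t)]

theorem mul_sub_le_add_deriv_sub (h : SolvesOn kineticField u J) (hJ : Convex ℝ J) {c : ℝ}
    (hc : ∀ τ ∈ J, c ≤ u τ ^ 4) {s t : ℝ} (hs : s ∈ J) (ht : t ∈ J) (hst : s ≤ t) :
    c * (t - s) ≤ (u t + deriv u t) - (u s + deriv u s) :=
  hJ.mul_sub_le_sub_of_hasDerivAt (fun _ hτ => h.hasDerivAt_add_deriv hτ) hc hs ht hst

theorem pos_and_deriv_pos (h : SolvesOn kineticField u J) (hJ : Convex ℝ J) (h0 : 0 ∈ J)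
    (hJ0 : J ⊆ Ici 0) (hu : 0 < u 0) (hu' : 0 < deriv u 0) :
    ∀ t ∈ J, 0 < u t ∧ 0 < deriv u t := by
  have hderiv : ∀ t ∈ J, 0 < deriv u t := fun t ht => h.deriv_pos_of_le hJ h0 ht (hJ0 ht) hu'
  exact fun t ht => ⟨hu.trans_le (h.monotoneOn hJ (fun τ hτ => (hderiv τ hτ).le) h0 ht (hJ0 ht)),
    hderiv t ht⟩

theorem exists_lt_of_Ici (h : SolvesOn kineticField u (Ici 0))
    (hpos : ∀ t ∈ Ici (0 : ℝ), 0 < u t ∧ 0 < deriv u t) (M : ℝ) :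
    ∃ t ∈ Ici (0 : ℝ), M < u t := by
  by_contra! hM
  have h0 : (0 : ℝ) ∈ Ici 0 := self_mem_Ici
  have hmono := h.monotoneOn (convex_Ici 0) fun t ht => (hpos t ht).2.le
  set B := max (M ^ 4) (deriv u 0)
  have hB : ∀ t ∈ Ici (0 : ℝ), deriv u t ≤ B := fun t ht =>
    h.deriv_le_max (convex_Ici 0) (fun τ hτ => pow_le_pow_left₀ (hpos τ hτ).1.le (hM τ hτ) 4)
      h0 ht ht
  have hc : ∀ τ ∈ Ici (0 : ℝ), u 0 ^ 4 ≤ u τ ^ 4 := fun τ hτ =>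
    pow_le_pow_left₀ (hpos 0 h0).1.le (hmono h0 hτ hτ) 4
  obtain ⟨t, hlarge, ht⟩ := (((tendsto_id.const_mul_atTop (pow_pos (hpos 0 h0).1 4)
    ).eventually_gt_atTop (M + B)).and (eventually_ge_atTop 0)).exists
  have hgrowth := h.mul_sub_le_add_deriv_sub (convex_Ici 0) hc h0 ht ht
  simp only [id, sub_zero] at hlarge hgrowth
  linarith [hM t ht, hB t ht, hpos 0 h0]

theorem exists_deriv_lt_of_Ici (h : SolvesOn kineticField u (Ici 0))
    (hpos : ∀ t ∈ Ici (0 : ℝ), 0 < u t ∧ 0 < deriv u t)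
    (hu : ∀ M, ∃ t ∈ Ici (0 : ℝ), M < u t) (M : ℝ) : ∃ t ∈ Ici (0 : ℝ), M < deriv u t := by
  by_contra! hM
  obtain ⟨t₀, ht₀, hut₀⟩ := hu (max 1 (2 * M))
  have hmono := h.monotoneOn (convex_Ici 0) fun t ht => (hpos t ht).2.le
  have hsub : Ici t₀ ⊆ Ici 0 := Ici_subset_Ici.2 ht₀
  have hgrowth := (convex_Ici t₀).mul_sub_le_sub_of_hasDerivAt (C := u t₀ ^ 4 - M)
    (fun _ hτ => h.hasDerivAt_deriv (hsub hτ))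
    (fun τ hτ => sub_le_sub (pow_le_pow_left₀ (hpos t₀ ht₀).1.le
      (hmono ht₀ (hsub hτ) hτ) 4) (hM τ (hsub hτ)))
    self_mem_Ici (show t₀ + 1 ∈ Ici t₀ by simp) (by linarith)
  have hpow : u t₀ ≤ u t₀ ^ 4 := le_self_pow₀ ((le_max_left _ _).trans hut₀.le) (by norm_num)
  linarith [hM (t₀ + 1) (hsub (show t₀ + 1 ∈ Ici t₀ by simp)), hpos t₀ ht₀,
    le_max_right 1 (2 * M)]

theorem exists_extension_of_le {T M : ℝ} (h : SolvesOn kineticField u (Ico 0 T)) (hT : 0 < T)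
    (hpos : ∀ t ∈ Ico 0 T, 0 < u t ∧ 0 < deriv u t) (hM : ∀ t ∈ Ico 0 T, u t ≤ M) :
    ∃ T' > T, ∃ v, EqOn v u (Ico 0 T) ∧ SolvesOn kineticField v (Ico 0 T') := by
  have hJ : Convex ℝ (Ico 0 T) := convex_Ico 0 T
  have h0 : (0 : ℝ) ∈ Ico 0 T := ⟨le_rfl, hT⟩
  have hB : ∀ t ∈ Ico 0 T, deriv u t ≤ max (M ^ 4) (deriv u 0) := fun t ht =>
    h.deriv_le_max hJ (fun τ hτ => pow_le_pow_left₀ (hpos τ hτ).1.le (hM τ hτ) 4) h0 ht ht.1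
  have hmono_add : MonotoneOn (fun t => u t + deriv u t) (Ico 0 T) := fun s hs t ht hst => by
    simpa using h.mul_sub_le_add_deriv_sub hJ (c := 0) (fun τ _ => by positivity) hs ht hst
  obtain ⟨p, hp⟩ := (h.monotoneOn hJ fun t ht => (hpos t ht).2.le).exists_tendsto_nhdsLT hT hM
  obtain ⟨r, hr⟩ := hmono_add.exists_tendsto_nhdsLT hT fun t ht => add_le_add (hM t ht) (hB t ht)
  exact h.exists_extension contDiff_kineticField hT hp (by simpa using hr.sub hp)

end SolvesOn

/-- First-quadrant orbits for k = 1: A maximal forward solution of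
`u'' + u' = u⁴` with `u(0) > 0`, `u'(0) > 0`, defined on `J = [0, T_max)`, satisfies
`u(τ) > 0` and `u'(τ) > 0` on all of `J` (the orbit never meets the axes), and both
`u` and `u'` are unbounded on `J`. Maximality is expressed as non-extendability. -/
theorem statement16 (u : ℝ → ℝ) (J : Set ℝ)
    (hJ : J = Set.Ici (0 : ℝ) ∨ ∃ Tmax : ℝ, 0 < Tmax ∧ J = Set.Ico 0 Tmax)
    (hd1 : ∀ τ ∈ J, DifferentiableAt ℝ u τ)
    (hd2 : ∀ τ ∈ J, DifferentiableAt ℝ (deriv u) τ)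
    (heq : ∀ τ ∈ J, deriv (deriv u) τ + deriv u τ = u τ ^ 4)
    (hinit : 0 < u 0) (hinit' : 0 < deriv u 0)
    (hmax : ∀ (v : ℝ → ℝ) (J' : Set ℝ),
      (J' = Set.Ici (0 : ℝ) ∨ ∃ T' : ℝ, 0 < T' ∧ J' = Set.Ico 0 T') →
      J ⊆ J' → Set.EqOn v u J →
      (∀ τ ∈ J', DifferentiableAt ℝ v τ) →
      (∀ τ ∈ J', DifferentiableAt ℝ (deriv v) τ) →
      (∀ τ ∈ J', deriv (deriv v) τ + deriv v τ = v τ ^ 4) →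
      J' ⊆ J) :
    (∀ τ ∈ J, 0 < u τ ∧ 0 < deriv u τ) ∧
    (∀ M : ℝ, ∃ τ ∈ J, M < u τ) ∧
    (∀ M : ℝ, ∃ τ ∈ J, M < deriv u τ) := by
  have h : SolvesOn kineticField u J := solvesOn_kineticField_iff.2 ⟨hd1, hd2, heq⟩
  obtain ⟨hconv, h0, hsub⟩ : Convex ℝ J ∧ 0 ∈ J ∧ J ⊆ Ici 0 := by
    rcases hJ with rfl | ⟨T, hT, rfl⟩
    · exact ⟨convex_Ici 0, self_mem_Ici, subset_rfl⟩
    · exact ⟨convex_Ico 0 T, ⟨le_rfl, hT⟩, Ico_subset_Ici_self⟩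
  have hpos := h.pos_and_deriv_pos hconv h0 hsub hinit hinit'
  rcases hJ with rfl | ⟨T, hT, rfl⟩
  · have hu := h.exists_lt_of_Ici hpos
    exact ⟨hpos, hu, h.exists_deriv_lt_of_Ici hpos hu⟩
  · have hu : ∀ M, ∃ τ ∈ Ico 0 T, M < u τ := by
      by_contra! hbdd
      obtain ⟨M, hM⟩ := hbdd
      obtain ⟨T', hTT', v, hvu, hv⟩ := h.exists_extension_of_le hT hpos hM
      obtain ⟨hv₁, hv₂, hv₃⟩ := solvesOn_kineticField_iff.1 hv
      have hT'T := hmax v (Ico 0 T') (Or.inr ⟨T', hT.trans hTT', rfl⟩)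
        (Ico_subset_Ico_right hTT'.le) hvu hv₁ hv₂ hv₃
      exact (hT'T ⟨hT.le, hTT'⟩).2.false
    exact ⟨hpos, hu, h.exists_deriv_lt_of_Ico hu⟩
end

section
/- (First-quadrant orbits for 0 < k < 1.) Let 0 < k < 1 and let u be a maximal forward solution of u''(τ) + (2k − 1)·u'(τ) + k(k − 1)·u(τ) = u(τ)^4 with u(0) > 0 and u'(0) > 0, defined on [0, T_max). Then u(τ) > 0 and u'(τ) > 0 for all τ ∈ [0, T_max) (the orbit never intersects the u- or v-axes), and both u and u' are unbounded: sup over [0, T_max) of u(τ) = +∞ and sup over [0, T_max) of u'(τ) = +∞. -/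
/-!
Along a solution, `(u' + (2k - 1) u)' = u ^ 4 + k (1 - k) u`, which is positive while `u > 0`.
At a first zero of `u'` the function `u` would still be positive, so `u'' > 0` there, which is
impossible; hence `u, u' > 0` throughout. If `u` stayed bounded on a finite interval `[0, T)`,
then `u` and `u' + (2k - 1) u` would be monotone and bounded, `(u, u')` would have a limit at `T`,
and Picard–Lindelöf would continue the solution past `T`, against maximality; a bounded `u'`
bounds `u` on `[0, T)`. On `[0, ∞)` the quantity `u' + (2k - 1) u` grows at least linearly, so a
bounded `u` would have `u' ≥ 1` eventually; and once `u ^ 4` is large, a bounded `u'` would have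
`u'' ≥ 1` eventually.
-/

open Set Filter Topology

section Continuation

variable {E : Type*} [NormedAddCommGroup E] [NormedSpace ℝ E] [CompleteSpace E]

-- Glue `w` to the Picard–Lindelöf solution through `x` at time `T`; the glued curve is
-- differentiable at `T` because its derivative has a limit there from the left.
theorem exists_hasDerivAt_extension_of_tendsto {g : E → E} (hg : ContDiff ℝ 1 g) {w : ℝ → E}
    {a T : ℝ} (haT : a < T) (hw : ∀ t ∈ Ioo a T, HasDerivAt w (g (w t)) t) {x : E}
    (hx : Tendsto w (𝓝[<] T) (𝓝 x)) :
    ∃ ε > 0, ∃ w' : ℝ → E, EqOn w' w (Iio T) ∧ ∀ t ∈ Ioo a (T + ε), HasDerivAt w' (g (w' t)) t := by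
  obtain ⟨α, hαT, ε, hε, hα⟩ :=
    hg.contDiffAt.exists_forall_mem_closedBall_exists_eq_forall_mem_Ioo_hasDerivAt₀ (x₀ := x) T
  set w' : ℝ → E := (Iio T).piecewise w α
  have hw'_left : EqOn w' w (Iio T) := fun t ht => piecewise_eq_of_mem _ _ _ ht
  have hw'_right : EqOn w' α (Ici T) := fun t ht => piecewise_eq_of_notMem _ _ _ (notMem_Iio.2 ht)
  have hw'T : w' T = x := (hw'_right self_mem_Ici).trans hαT
  refine ⟨ε, hε, w', hw'_left, fun t ht => ?_⟩
  rcases lt_trichotomy t T with htT | rfl | hTt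
  · rw [hw'_left htT]
    exact (hw t ⟨ht.1, htT⟩).congr_of_eventuallyEq
      (eventually_of_mem (Iio_mem_nhds htT) hw'_left)
  · have hIoo : Ioo a t ∈ 𝓝[<] t := Ioo_mem_nhdsLT haT
    have hderiv : ∀ s ∈ Ioo a t, HasDerivAt w' (g (w s)) s := fun s hs =>
      (hw s hs).congr_of_eventuallyEq (eventually_of_mem (Iio_mem_nhds hs.2) hw'_left)
    have hleft : HasDerivWithinAt w' (g x) (Iic t) t := by
      refine hasDerivWithinAt_Iic_of_tendsto_deriv
        (fun s hs => (hderiv s hs).differentiableAt.differentiableWithinAt) ?_ hIoo ?_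
      · rw [ContinuousWithinAt, hw'T]
        exact (hx.mono_left (nhdsWithin_mono _ Ioo_subset_Iio_self)).congr'
          (eventually_nhdsWithin_of_forall fun s hs => (hw'_left hs.2).symm)
      · exact ((hg.continuous.tendsto x).comp hx).congr'
          (eventually_of_mem hIoo fun s hs => (hderiv s hs).deriv.symm)
    have hright : HasDerivWithinAt w' (g x) (Ici t) t := by
      have := hα t ⟨by linarith, by linarith⟩
      rw [hαT] at this
      exact this.hasDerivWithinAt.congr hw'_right (hw'_right self_mem_Ici)
    rw [hw'T, ← hasDerivWithinAt_univ, ← Iic_union_Ici]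
    exact hleft.union hright
  · rw [hw'_right hTt.le]
    exact (hα t ⟨by linarith, ht.2⟩).congr_of_eventuallyEq
      (eventually_of_mem (Ioi_mem_nhds hTt) fun s (hs : T < s) => hw'_right hs.le)

end Continuation

section SecondOrder

variable {F : ℝ × ℝ → ℝ} {u v : ℝ → ℝ} {τ : ℝ} {s : Set ℝ}

def IsSolutionAt (F : ℝ × ℝ → ℝ) (u : ℝ → ℝ) (τ : ℝ) : Prop :=
  DifferentiableAt ℝ u τ ∧ HasDerivAt (deriv u) (F (u τ, deriv u τ)) τ

def IsSolutionOn (F : ℝ × ℝ → ℝ) (u : ℝ → ℝ) (s : Set ℝ) : Prop :=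
  ∀ τ ∈ s, IsSolutionAt F u τ

theorem IsSolutionAt.congr_of_eventuallyEq (hu : IsSolutionAt F u τ) (hvu : v =ᶠ[𝓝 τ] u) :
    IsSolutionAt F v τ := by
  refine ⟨hvu.differentiableAt_iff.2 hu.1, ?_⟩
  rw [hvu.eq_of_nhds, hvu.deriv.eq_of_nhds]
  exact hu.2.congr_of_eventuallyEq hvu.deriv

theorem IsSolutionOn.mono {t : Set ℝ} (hu : IsSolutionOn F u s) (hts : t ⊆ s) :
    IsSolutionOn F u t :=
  fun τ hτ => hu τ (hts hτ)

theorem IsSolutionOn.continuousOn (hu : IsSolutionOn F u s) : ContinuousOn u s :=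
  fun τ hτ => (hu τ hτ).1.continuousAt.continuousWithinAt

theorem IsSolutionOn.monotoneOn (hs : Convex ℝ s) (hu : IsSolutionOn F u s)
    (hu' : ∀ τ ∈ interior s, 0 ≤ deriv u τ) : MonotoneOn u s :=
  monotoneOn_of_deriv_nonneg hs hu.continuousOn
    (fun τ hτ => (hu τ (interior_subset hτ)).1.differentiableWithinAt) hu'

theorem IsSolutionOn.exists_extension (hF : ContDiff ℝ 1 F) {a T : ℝ} (haT : a < T)
    (hu : IsSolutionOn F u (Ico a T)) {A V : ℝ} (hA : Tendsto u (𝓝[<] T) (𝓝 A))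
    (hV : Tendsto (deriv u) (𝓝[<] T) (𝓝 V)) :
    ∃ v T', T < T' ∧ EqOn v u (Ico a T) ∧ IsSolutionOn F v (Ico a T') := by
  have hg : ContDiff ℝ 1 fun p : ℝ × ℝ => (p.2, F p) := contDiff_snd.prodMk hF
  obtain ⟨ε, hε, w, hw, hw'⟩ := exists_hasDerivAt_extension_of_tendsto hg haT
    (w := fun t => (u t, deriv u t))
    (fun t ht => ((hu t (Ioo_subset_Ico_self ht)).1.hasDerivAt.prodMk
      (hu t (Ioo_subset_Ico_self ht)).2))
    (hA.prodMk_nhds hV)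
  set v : ℝ → ℝ := fun t => (w t).1
  have hv : ∀ t ∈ Ioo a (T + ε), HasDerivAt v (w t).2 t := fun t ht => by
    simpa using (hw' t ht).hasFDerivAt.fst.hasDerivAt
  have hv' : ∀ t ∈ Ioo a (T + ε), HasDerivAt (deriv v) (F (w t)) t := fun t ht => by
    have : HasDerivAt (fun t => (w t).2) (F (w t)) t := by
      simpa using (hw' t ht).hasFDerivAt.snd.hasDerivAt
    exact this.congr_of_eventuallyEq
      (eventually_of_mem (isOpen_Ioo.mem_nhds ht) fun s hs => (hv s hs).deriv)
  have hvu : EqOn v u (Iio T) := fun t ht => by simp [v, hw ht]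
  refine ⟨v, T + ε, by linarith, hvu.mono Ico_subset_Iio_self, fun t ht => ?_⟩
  rcases lt_or_ge t T with htT | hTt
  · exact (hu t ⟨ht.1, htT⟩).congr_of_eventuallyEq (eventually_of_mem (Iio_mem_nhds htT) hvu)
  · have ht' : t ∈ Ioo a (T + ε) := ⟨haT.trans_le hTt, ht.2⟩
    refine ⟨(hv t ht').differentiableAt, ?_⟩
    rw [(hv t ht').deriv]
    exact hv' t ht'

end SecondOrder

section RealFunctions

variable {f : ℝ → ℝ} {a b : ℝ}

theorem exists_first_zero (hab : a ≤ b) (hf : ContinuousOn f (Icc a b)) (ha : 0 < f a)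
    (hb : f b ≤ 0) : ∃ c ∈ Ioc a b, f c = 0 ∧ ∀ x ∈ Ico a c, 0 < f x := by
  set S := Icc a b ∩ f ⁻¹' Iic 0
  have hS : IsClosed S := hf.preimage_isClosed_of_isClosed isClosed_Icc isClosed_Iic
  have hSb : b ∈ S := ⟨⟨hab, le_rfl⟩, hb⟩
  have hSa : a ∈ lowerBounds S := fun x hx => hx.1.1
  obtain ⟨⟨hac, hcb⟩, hc⟩ : sInf S ∈ S := hS.csInf_mem ⟨b, hSb⟩ ⟨a, hSa⟩
  have hfirst : ∀ x ∈ Ico a (sInf S), 0 < f x := fun x hx => by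
    by_contra! hfx
    exact (csInf_le ⟨a, hSa⟩ ⟨⟨hx.1, hx.2.le.trans hcb⟩, hfx⟩).not_gt hx.2
  obtain ⟨z, hz, hfz⟩ := intermediate_value_Icc' hac (hf.mono (Icc_subset_Icc_right hcb))
    ⟨hc, ha.le⟩
  have hzc : z = sInf S := le_antisymm hz.2 (csInf_le ⟨a, hSa⟩ ⟨⟨hz.1, hz.2.trans hcb⟩, hfz.le⟩)
  refine ⟨sInf S, ⟨hac.lt_of_ne ?_, hcb⟩, hzc ▸ hfz, hfirst⟩
  intro hca
  rw [← hca] at hc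
  exact (ha.trans_le hc).false

theorem HasDerivAt.eventually_lt_of_pos {f' : ℝ} (hf : HasDerivAt f f' a) (hf' : 0 < f') :
    ∀ᶠ x in 𝓝[<] a, f x < f a := by
  have hslope : Tendsto (slope f a) (𝓝[<] a) (𝓝 f') :=
    (hasDerivAt_iff_tendsto_slope.1 hf).mono_left (nhdsWithin_mono _ fun x hx => ne_of_lt hx)
  filter_upwards [hslope.eventually (eventually_gt_nhds hf'), self_mem_nhdsWithin]
    with x hpos (hxa : x < a)
  rw [slope_def_field] at hpos
  linarith [(div_pos_iff.1 hpos).resolve_left fun h => (sub_neg.2 hxa).not_gt h.2]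

theorem MonotoneOn.exists_tendsto_nhdsLT_s17 (hab : a < b) (hf : MonotoneOn f (Ico a b))
    (hbdd : BddAbove (f '' Ico a b)) : ∃ L, Tendsto f (𝓝[<] b) (𝓝 L) :=
  ⟨_, (hf.mono Ioo_subset_Ico_self).tendsto_nhdsWithin_Ioo_left (nonempty_Ioo.2 hab)
    (hbdd.mono (image_mono Ioo_subset_Ico_self))⟩

theorem tendsto_atTop_of_le_deriv {c : ℝ} (hc : 0 < c)
    (hf : ∀ x ∈ Ici a, DifferentiableAt ℝ f x) (hf' : ∀ x ∈ Ioi a, c ≤ deriv f x) :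
    Tendsto f atTop atTop := by
  have hgrowth := (convex_Ici a).mul_sub_le_image_sub_of_le_deriv
    (fun x hx => (hf x hx).continuousAt.continuousWithinAt)
    (fun x hx => (hf x (interior_subset hx)).differentiableWithinAt)
    (by rwa [interior_Ici]) a self_mem_Ici
  have hlin : Tendsto (fun x => f a + c * (x - a)) atTop atTop :=
    tendsto_atTop_add_const_left _ _
      ((tendsto_atTop_add_const_right _ (-a) tendsto_id).const_mul_atTop hc)
  refine tendsto_atTop_mono' _ ?_ hlin
  filter_upwards [eventually_ge_atTop a] with x hx
  linarith [hgrowth x hx hx]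

theorem bddAbove_image_Ico_of_bddAbove_deriv (hf : ∀ x ∈ Ico a b, DifferentiableAt ℝ f x)
    (hf' : BddAbove (deriv f '' Ico a b)) : BddAbove (f '' Ico a b) := by
  obtain ⟨M, hM⟩ := hf'
  refine ⟨f a + max M 0 * (b - a), forall_mem_image.2 fun x hx => ?_⟩
  have := (convex_Ico a b).image_sub_le_mul_sub_of_deriv_le
    (fun x hx => (hf x hx).continuousAt.continuousWithinAt)
    (fun x hx => (hf x (interior_subset hx)).differentiableWithinAt)
    (fun x hx => (hM (mem_image_of_mem _ (interior_subset hx))).trans (le_max_left M 0))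
    a ⟨le_rfl, hx.1.trans_lt hx.2⟩ x hx hx.1
  nlinarith [le_max_right M 0, hx.2]

end RealFunctions

section KineticEquation

variable {k : ℝ} {u : ℝ → ℝ}

def kineticRhs (k : ℝ) (p : ℝ × ℝ) : ℝ := p.1 ^ 4 - k * (k - 1) * p.1 - (2 * k - 1) * p.2

theorem contDiff_kineticRhs {n : WithTop ℕ∞} : ContDiff ℝ n (kineticRhs k) := by
  unfold kineticRhs
  fun_prop

theorem isSolutionOn_kineticRhs_iff {s : Set ℝ} :
    IsSolutionOn (kineticRhs k) u s ↔ (∀ τ ∈ s, DifferentiableAt ℝ u τ) ∧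
      (∀ τ ∈ s, DifferentiableAt ℝ (deriv u) τ) ∧
      ∀ τ ∈ s, deriv (deriv u) τ + (2 * k - 1) * deriv u τ + k * (k - 1) * u τ = u τ ^ 4 := by
  refine ⟨fun hu => ⟨fun τ hτ => (hu τ hτ).1, fun τ hτ => (hu τ hτ).2.differentiableAt,
    fun τ hτ => ?_⟩, fun ⟨hd1, hd2, heq⟩ τ hτ => ⟨hd1 τ hτ, ?_⟩⟩
  · rw [(hu τ hτ).2.deriv, kineticRhs]
    ring
  · refine (hd2 τ hτ).hasDerivAt.congr_deriv ?_
    simp only [kineticRhs]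
    linarith [heq τ hτ]

theorem IsSolutionAt.hasDerivAt_deriv_add_mul {τ : ℝ} (hu : IsSolutionAt (kineticRhs k) u τ) :
    HasDerivAt (fun s => deriv u s + (2 * k - 1) * u s) (u τ ^ 4 + k * (1 - k) * u τ) τ := by
  refine (hu.2.add (hu.1.hasDerivAt.const_mul (2 * k - 1))).congr_deriv ?_
  simp only [kineticRhs]
  ring

theorem pow_four_add_mul_pos (hk0 : 0 < k) (hk1 : k < 1) {x : ℝ} (hx : 0 < x) :
    0 < x ^ 4 + k * (1 - k) * x := by
  have : 0 < k * (1 - k) := mul_pos hk0 (sub_pos.2 hk1)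
  positivity

theorem pow_four_add_mul_le (hk0 : 0 < k) (hk1 : k < 1) {x y : ℝ} (hx : 0 ≤ x) (hxy : x ≤ y) :
    x ^ 4 + k * (1 - k) * x ≤ y ^ 4 + k * (1 - k) * y := by
  have : 0 ≤ k * (1 - k) := (mul_pos hk0 (sub_pos.2 hk1)).le
  gcongr

theorem IsSolutionOn.pos_of_Icc (hk0 : 0 < k) (hk1 : k < 1) {b : ℝ}
    (hu : IsSolutionOn (kineticRhs k) u (Icc 0 b)) (h0 : 0 < u 0) (h0' : 0 < deriv u 0) :
    ∀ τ ∈ Icc 0 b, 0 < u τ ∧ 0 < deriv u τ := by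
  have hu_pos : ∀ c ∈ Icc 0 b, (∀ τ ∈ Ico 0 c, 0 < deriv u τ) → 0 < u c := by
    intro c hc hpos
    have hmono := (hu.mono (Icc_subset_Icc_right hc.2)).monotoneOn (convex_Icc 0 c)
      fun τ hτ => by
        rw [interior_Icc] at hτ
        exact (hpos τ (Ioo_subset_Ico_self hτ)).le
    exact h0.trans_le (hmono (left_mem_Icc.2 hc.1) (right_mem_Icc.2 hc.1) hc.1)
  suffices h : ∀ τ ∈ Icc 0 b, 0 < deriv u τ from fun τ hτ =>
    ⟨hu_pos τ hτ fun σ hσ => h σ ⟨hσ.1, hσ.2.le.trans hτ.2⟩, h τ hτ⟩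
  intro c hc
  by_contra! hc'
  obtain ⟨τ₀, hτ₀, hzero, hfirst⟩ := exists_first_zero hc.1
    (fun τ hτ => (hu τ ⟨hτ.1, hτ.2.trans hc.2⟩).2.continuousAt.continuousWithinAt) h0' hc'
  have hτ₀b : τ₀ ∈ Icc 0 b := ⟨hτ₀.1.le, hτ₀.2.trans hc.2⟩
  have hacc : 0 < kineticRhs k (u τ₀, deriv u τ₀) := by
    have := pow_four_add_mul_pos hk0 hk1 (hu_pos τ₀ hτ₀b hfirst)
    simp only [kineticRhs, hzero]
    linarith
  obtain ⟨σ, hσ_neg, hσ⟩ :=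
    (((hu τ₀ hτ₀b).2.eventually_lt_of_pos hacc).and (Ioo_mem_nhdsLT hτ₀.1)).exists
  linarith [hfirst σ (Ioo_subset_Ico_self hσ)]

theorem IsSolutionOn.not_bddAbove_Ici (hk0 : 0 < k) (hk1 : k < 1)
    (hu : IsSolutionOn (kineticRhs k) u (Ici 0))
    (hpos : ∀ τ ∈ Ici 0, 0 < u τ ∧ 0 < deriv u τ) : ¬BddAbove (u '' Ici 0) := by
  rintro ⟨M, hM⟩
  have hmono : MonotoneOn u (Ici 0) :=
    hu.monotoneOn (convex_Ici 0) fun τ hτ => (hpos τ (interior_subset hτ)).2.le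
  have hm : Tendsto (fun s => deriv u s + (2 * k - 1) * u s) atTop atTop := by
    refine tendsto_atTop_of_le_deriv (pow_four_add_mul_pos hk0 hk1 (hpos 0 self_mem_Ici).1)
      (fun τ hτ => (hu τ hτ).hasDerivAt_deriv_add_mul.differentiableAt) fun τ (hτ : 0 < τ) => ?_
    rw [(hu τ hτ.le).hasDerivAt_deriv_add_mul.deriv]
    exact pow_four_add_mul_le hk0 hk1 (hpos 0 self_mem_Ici).1.le (hmono self_mem_Ici hτ.le hτ.le)
  obtain ⟨T, hT⟩ := eventually_atTop.1 (hm.eventually_ge_atTop (M + 1))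
  have hu' : ∀ τ ∈ Ioi (max T 0), 1 ≤ deriv u τ := fun τ hτ => by
    have hτ0 : τ ∈ Ici 0 := (le_max_right T 0).trans hτ.le
    have := hT τ ((le_max_left T 0).trans hτ.le)
    nlinarith [hM (mem_image_of_mem u hτ0), mul_pos (sub_pos.2 hk1) (hpos τ hτ0).1]
  have hu_top : Tendsto u atTop atTop := tendsto_atTop_of_le_deriv one_pos
    (fun τ hτ => (hu τ ((le_max_right T 0).trans hτ)).1) hu'
  obtain ⟨τ, hτM, hτ⟩ := ((hu_top.eventually_gt_atTop M).and (eventually_ge_atTop 0)).exists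
  exact (hτM.trans_le (hM (mem_image_of_mem u hτ))).false

theorem IsSolutionOn.not_bddAbove_deriv_Ici (hk0 : 0 < k) (hk1 : k < 1)
    (hu : IsSolutionOn (kineticRhs k) u (Ici 0))
    (hpos : ∀ τ ∈ Ici 0, 0 < u τ ∧ 0 < deriv u τ) : ¬BddAbove (deriv u '' Ici 0) := by
  rintro ⟨M, hM⟩
  have hmono : MonotoneOn u (Ici 0) :=
    hu.monotoneOn (convex_Ici 0) fun τ hτ => (hpos τ (interior_subset hτ)).2.le
  obtain ⟨_, ⟨T, hT, rfl⟩, hTu⟩ :=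
    not_bddAbove_iff.1 (hu.not_bddAbove_Ici hk0 hk1 hpos) (max 1 (M + 1))
  have hu'' : ∀ τ ∈ Ioi T, 1 ≤ deriv (deriv u) τ := fun τ hτ => by
    have hτ0 : τ ∈ Ici 0 := (mem_Ici.1 hT).trans hτ.le
    have huτ : max 1 (M + 1) ≤ u τ := hTu.le.trans (hmono hT hτ0 hτ.le)
    have : u τ ≤ u τ ^ 4 := le_self_pow₀ (le_of_max_le_left huτ) (by norm_num)
    rw [(hu τ hτ0).2.deriv, kineticRhs]
    nlinarith [hM (mem_image_of_mem _ hτ0), le_of_max_le_right huτ,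
      mul_pos (mul_pos hk0 (sub_pos.2 hk1)) (hpos τ hτ0).1,
      mul_pos (sub_pos.2 hk1) (hpos τ hτ0).2]
  have hu'_top : Tendsto (deriv u) atTop atTop := tendsto_atTop_of_le_deriv one_pos
    (fun τ hτ => (hu τ ((mem_Ici.1 hT).trans hτ)).2.differentiableAt) hu''
  obtain ⟨τ, hτM, hτ⟩ := ((hu'_top.eventually_gt_atTop M).and (eventually_ge_atTop 0)).exists
  exact (hτM.trans_le (hM (mem_image_of_mem _ hτ))).false

theorem IsSolutionOn.exists_extension_of_bddAbove (hk0 : 0 < k) (hk1 : k < 1) {T : ℝ}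
    (hT : 0 < T) (hu : IsSolutionOn (kineticRhs k) u (Ico 0 T))
    (hpos : ∀ τ ∈ Ico 0 T, 0 < u τ ∧ 0 < deriv u τ) (hbdd : BddAbove (u '' Ico 0 T)) :
    ∃ v T', T < T' ∧ EqOn v u (Ico 0 T) ∧ IsSolutionOn (kineticRhs k) v (Ico 0 T') := by
  obtain ⟨A, hA⟩ := (hu.monotoneOn (convex_Ico 0 T) fun τ hτ =>
    (hpos τ (interior_subset hτ)).2.le).exists_tendsto_nhdsLT_s17 hT hbdd
  obtain ⟨M, hM⟩ := hbdd
  set m := fun s => deriv u s + (2 * k - 1) * u s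
  have hm' : ∀ τ ∈ Ico 0 T, HasDerivAt m (u τ ^ 4 + k * (1 - k) * u τ) τ :=
    fun τ hτ => (hu τ hτ).hasDerivAt_deriv_add_mul
  have hm_mono : MonotoneOn m (Ico 0 T) :=
    monotoneOn_of_deriv_nonneg (convex_Ico 0 T)
      (fun τ hτ => (hm' τ hτ).continuousAt.continuousWithinAt)
      (fun τ hτ => (hm' τ (interior_subset hτ)).differentiableAt.differentiableWithinAt)
      fun τ hτ => by
        rw [(hm' τ (interior_subset hτ)).deriv]
        exact (pow_four_add_mul_pos hk0 hk1 (hpos τ (interior_subset hτ)).1).le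
  have hm_bdd : BddAbove (m '' Ico 0 T) :=
    bddAbove_image_Ico_of_bddAbove_deriv (fun τ hτ => (hm' τ hτ).differentiableAt)
      ⟨M ^ 4 + k * (1 - k) * M, forall_mem_image.2 fun τ hτ => by
        rw [(hm' τ hτ).deriv]
        exact pow_four_add_mul_le hk0 hk1 (hpos τ hτ).1.le (hM (mem_image_of_mem u hτ))⟩
  obtain ⟨L, hL⟩ := hm_mono.exists_tendsto_nhdsLT_s17 hT hm_bdd
  have hV : Tendsto (deriv u) (𝓝[<] T) (𝓝 (L - (2 * k - 1) * A)) :=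
    (hL.sub (hA.const_mul _)).congr fun s => by simp [m]
  exact hu.exists_extension contDiff_kineticRhs hT hA hV

end KineticEquation

/-- First-quadrant orbits for 0 < k < 1: A maximal forward solution of
`u'' + (2k-1)u' + k(k-1)u = u⁴`, `0 < k < 1`, with `u(0) > 0`, `u'(0) > 0`, defined on
`J = [0, T_max)`, satisfies `u(τ) > 0` and `u'(τ) > 0` on all of `J` (the orbit never
meets the axes), and both `u` and `u'` are unbounded on `J`. Maximality is expressed as
non-extendability. -/
theorem statement17 (k : ℝ) (hk0 : 0 < k) (hk1 : k < 1) (u : ℝ → ℝ) (J : Set ℝ)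
    (hJ : J = Set.Ici (0 : ℝ) ∨ ∃ Tmax : ℝ, 0 < Tmax ∧ J = Set.Ico 0 Tmax)
    (hd1 : ∀ τ ∈ J, DifferentiableAt ℝ u τ)
    (hd2 : ∀ τ ∈ J, DifferentiableAt ℝ (deriv u) τ)
    (heq : ∀ τ ∈ J,
      deriv (deriv u) τ + (2 * k - 1) * deriv u τ + k * (k - 1) * u τ = u τ ^ 4)
    (hinit : 0 < u 0) (hinit' : 0 < deriv u 0)
    (hmax : ∀ (v : ℝ → ℝ) (J' : Set ℝ),
      (J' = Set.Ici (0 : ℝ) ∨ ∃ T' : ℝ, 0 < T' ∧ J' = Set.Ico 0 T') →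
      J ⊆ J' → Set.EqOn v u J →
      (∀ τ ∈ J', DifferentiableAt ℝ v τ) →
      (∀ τ ∈ J', DifferentiableAt ℝ (deriv v) τ) →
      (∀ τ ∈ J',
        deriv (deriv v) τ + (2 * k - 1) * deriv v τ + k * (k - 1) * v τ = v τ ^ 4) →
      J' ⊆ J) :
    (∀ τ ∈ J, 0 < u τ ∧ 0 < deriv u τ) ∧
    (∀ M : ℝ, ∃ τ ∈ J, M < u τ) ∧
    (∀ M : ℝ, ∃ τ ∈ J, M < deriv u τ) := by
  have hu : IsSolutionOn (kineticRhs k) u J := isSolutionOn_kineticRhs_iff.2 ⟨hd1, hd2, heq⟩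
  have hJ_Icc : ∀ τ ∈ J, 0 ≤ τ ∧ Icc 0 τ ⊆ J := by
    rcases hJ with rfl | ⟨T, -, rfl⟩
    exacts [fun _ hτ => ⟨hτ, fun _ hσ => hσ.1⟩,
      fun _ hτ => ⟨hτ.1, fun _ hσ => ⟨hσ.1, hσ.2.trans_lt hτ.2⟩⟩]
  have hpos : ∀ τ ∈ J, 0 < u τ ∧ 0 < deriv u τ := fun τ hτ =>
    (hu.mono (hJ_Icc τ hτ).2).pos_of_Icc hk0 hk1 hinit hinit' τ
      (right_mem_Icc.2 (hJ_Icc τ hτ).1)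
  suffices ¬BddAbove (u '' J) ∧ ¬BddAbove (deriv u '' J) by
    simpa only [not_bddAbove_iff, exists_mem_image] using And.intro hpos this
  rcases hJ with rfl | ⟨T, hT, rfl⟩
  · exact ⟨hu.not_bddAbove_Ici hk0 hk1 hpos, hu.not_bddAbove_deriv_Ici hk0 hk1 hpos⟩
  have hu_unbdd : ¬BddAbove (u '' Ico 0 T) := fun hbdd => by
    obtain ⟨v, T', hTT', hvu, hv⟩ := hu.exists_extension_of_bddAbove hk0 hk1 hT hpos hbdd
    obtain ⟨hv1, hv2, hv3⟩ := isSolutionOn_kineticRhs_iff.1 hv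
    exact (hmax v _ (Or.inr ⟨T', hT.trans hTT', rfl⟩) (Ico_subset_Ico_right hTT'.le) hvu
      hv1 hv2 hv3 ⟨hT.le, hTT'⟩).2.false
  exact ⟨hu_unbdd, fun hbdd => hu_unbdd (bddAbove_image_Ico_of_bddAbove_deriv hd1 hbdd)⟩
end
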